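/- arXiv:1911.10463 — 7 statements merged into one kernel-verified Lean document; each statement's English description precedes it below -/
import Mathlib

section
/- Let X, Y be Hilbert spaces, A : X → Y a bounded linear operator, and (Pₙ) a sequence of orthogonal projections onto closed subspaces Xₙ ⊆ X converging strongly to the identity on X. Define Aₙ := A ∘ Pₙ restricted to Xₙ. Then the range of Aₙ equals A(Xₙ), which is contained in the range of A, and the orthogonal projections onto A(Xₙ) converge strongly to the orthogonal projection onto the closure of the range of A. -/
noncomputable section
open ContinuousLinearMap Submodule Filter Topology MeasureTheory

/-- The orthogonal projection onto the closure of a submodule, as an operator on the ambient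
Hilbert space. -/
def projCl {E : Type*} [NormedAddCommGroup E] [InnerProductSpace ℂ E] [CompleteSpace E]
    (K : Submodule ℂ E) : E →L[ℂ] E :=
  haveI : CompleteSpace K.topologicalClosure := K.isClosed_topologicalClosure.completeSpace_coe
  K.topologicalClosure.subtypeL ∘L orthogonalProjection K.topologicalClosure

/-- `P` is the orthogonal projection of `E` onto the subspace `K`:
idempotent, self-adjoint, with range `K`. -/
def IsOrthProj {E : Type*} [NormedAddCommGroup E] [InnerProductSpace ℂ E] [CompleteSpace E]
    (P : E →L[ℂ] E) (K : Submodule ℂ E) : Prop :=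
  P ∘L P = P ∧ ContinuousLinearMap.adjoint P = P ∧ LinearMap.range (P : E →ₗ[ℂ] E) = K

/-- `B` is the Moore–Penrose generalized inverse of `T`. -/
def IsMPInv {E F : Type*} [NormedAddCommGroup E] [InnerProductSpace ℂ E] [CompleteSpace E]
    [NormedAddCommGroup F] [InnerProductSpace ℂ F] [CompleteSpace F]
    (T : E →L[ℂ] F) (B : F →L[ℂ] E) : Prop :=
  T ∘L B ∘L T = T ∧ B ∘L T ∘L B = B ∧
  ContinuousLinearMap.adjoint (T ∘L B) = T ∘L B ∧
  ContinuousLinearMap.adjoint (B ∘L T) = B ∘L T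

section helpers

variable {E : Type*} [NormedAddCommGroup E] [InnerProductSpace ℂ E] [CompleteSpace E]

lemma projCl_apply' (K : Submodule ℂ E) (y : E) :
    haveI : CompleteSpace K.topologicalClosure := K.isClosed_topologicalClosure.completeSpace_coe
    projCl K y = (orthogonalProjection K.topologicalClosure y : E) := rfl

lemma projCl_norm_apply_le (K : Submodule ℂ E) (y : E) : ‖projCl K y‖ ≤ ‖y‖ := by
  haveI : CompleteSpace K.topologicalClosure := K.isClosed_topologicalClosure.completeSpace_coe
  rw [projCl_apply']
  calc ‖(orthogonalProjection K.topologicalClosure y : E)‖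
      = ‖orthogonalProjection K.topologicalClosure y‖ := rfl
    _ ≤ ‖orthogonalProjection K.topologicalClosure‖ * ‖y‖ :=
        (orthogonalProjection K.topologicalClosure).le_opNorm y
    _ ≤ 1 * ‖y‖ := by
        gcongr; exact orthogonalProjection_norm_le _
    _ = ‖y‖ := one_mul _

lemma projCl_eq_zero_of_mem_orthogonal {K : Submodule ℂ E} {y : E}
    (h : y ∈ K.topologicalClosureᗮ) : projCl K y = 0 := by
  haveI : CompleteSpace K.topologicalClosure := K.isClosed_topologicalClosure.completeSpace_coe
  rw [projCl_apply', orthogonalProjection_mem_subspace_orthogonalComplement_eq_zero h]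
  rfl

lemma sub_projCl_mem_orthogonal (K : Submodule ℂ E) (y : E) :
    y - projCl K y ∈ K.topologicalClosureᗮ := by
  haveI : CompleteSpace K.topologicalClosure := K.isClosed_topologicalClosure.completeSpace_coe
  rw [projCl_apply']
  exact K.topologicalClosure.sub_starProjection_mem_orthogonal y

lemma projCl_min {K : Submodule ℂ E} (w : E) {v : E} (hv : v ∈ K) :
    ‖w - projCl K w‖ ≤ ‖w - v‖ := by
  haveI : CompleteSpace K.topologicalClosure := K.isClosed_topologicalClosure.completeSpace_coe
  rw [projCl_apply']
  change ‖w - K.topologicalClosure.starProjection w‖ ≤ _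
  rw [Submodule.starProjection_minimal]
  refine ciInf_le_of_le ⟨0, ?_⟩ (⟨v, K.le_topologicalClosure hv⟩ : K.topologicalClosure) le_rfl
  rintro _ ⟨x, rfl⟩
  positivity

end helpers

/-- Lemma 2.1: with `Aₙ := A ∘ Pₙ`, the range of `Aₙ` equals `A(Xₙ)`,
which is contained in the range of `A`, and the orthogonal projections onto (the closures of)
`A(Xₙ)` converge strongly to the orthogonal projection onto the closure of the range of `A`. -/
theorem stmt0 {X Y : Type*} [NormedAddCommGroup X] [InnerProductSpace ℂ X] [CompleteSpace X]
    [NormedAddCommGroup Y] [InnerProductSpace ℂ Y] [CompleteSpace Y]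
    (A : X →L[ℂ] Y) (Xn : ℕ → Submodule ℂ X) (hXn : ∀ n, IsClosed (Xn n : Set X))
    (P : ℕ → X →L[ℂ] X) (hP : ∀ n, IsOrthProj (P n) (Xn n))
    (hPconv : ∀ x : X, Filter.Tendsto (fun n => P n x) atTop (nhds x)) :
    (∀ n, LinearMap.range ((A ∘L P n : X →L[ℂ] Y) : X →ₗ[ℂ] Y) = (Xn n).map (A : X →ₗ[ℂ] Y) ∧
      (Xn n).map (A : X →ₗ[ℂ] Y) ≤ LinearMap.range ((A : X →L[ℂ] Y) : X →ₗ[ℂ] Y)) ∧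
    (∀ y : Y, Filter.Tendsto (fun n => projCl ((Xn n).map (A : X →ₗ[ℂ] Y)) y) atTop
      (nhds (projCl (LinearMap.range ((A : X →L[ℂ] Y) : X →ₗ[ℂ] Y)) y))) := by
  have hrangeP : ∀ n, LinearMap.range (P n : X →ₗ[ℂ] X) = Xn n := fun n => (hP n).2.2
  constructor
  · intro n
    constructor
    · rw [← hrangeP n]
      exact LinearMap.range_comp ((P n : X →ₗ[ℂ] X)) (A : X →ₗ[ℂ] Y)
    · exact LinearMap.map_le_range
  · intro y
    set R : Submodule ℂ Y := LinearMap.range ((A : X →L[ℂ] Y) : X →ₗ[ℂ] Y) with hR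
    set q : Y := projCl R y with hq
    -- each approximate projection only sees q
    have hle : ∀ n, (Xn n).map (A : X →ₗ[ℂ] Y) ≤ R := fun n => LinearMap.map_le_range
    have hproj_eq : ∀ n, projCl ((Xn n).map (A : X →ₗ[ℂ] Y)) y = projCl ((Xn n).map (A : X →ₗ[ℂ] Y)) q := by
      intro n
      have horth : y - q ∈ ((Xn n).map (A : X →ₗ[ℂ] Y)).topologicalClosureᗮ := by
        refine Submodule.orthogonal_le (Submodule.topologicalClosure_mono (hle n)) ?_
        exact sub_projCl_mem_orthogonal R y
      have h0 : projCl ((Xn n).map (A : X →ₗ[ℂ] Y)) (y - q) = 0 :=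
        projCl_eq_zero_of_mem_orthogonal horth
      have h1 : projCl ((Xn n).map (A : X →ₗ[ℂ] Y)) y - projCl ((Xn n).map (A : X →ₗ[ℂ] Y)) q = 0 := by
        rw [← map_sub]; exact h0
      exact sub_eq_zero.mp h1
    -- q lies in the closure of the range of A
    have hq_mem : q ∈ closure (R : Set Y) := by
      have : projCl R y ∈ R.topologicalClosure := by
        haveI : CompleteSpace R.topologicalClosure :=
          R.isClosed_topologicalClosure.completeSpace_coe
        rw [projCl_apply']
        exact (orthogonalProjection R.topologicalClosure y).2
      exact this
    simp only [hproj_eq]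
    rw [Metric.tendsto_atTop]
    intro ε hε
    obtain ⟨w, hwR, hwq⟩ := Metric.mem_closure_iff.mp hq_mem (ε / 3) (by positivity)
    obtain ⟨x, hx⟩ := hwR
    have hAx : Tendsto (fun n => A (P n x)) atTop (nhds (A x)) :=
      (A.continuous.tendsto x).comp (hPconv x)
    obtain ⟨N, hN⟩ := (Metric.tendsto_atTop.mp hAx) (ε / 3) (by positivity)
    refine ⟨N, fun n hn => ?_⟩
    have hPx_mem : P n x ∈ Xn n := by rw [← hrangeP n]; exact ⟨x, rfl⟩
    have hAPx_mem : A (P n x) ∈ (Xn n).map (A : X →ₗ[ℂ] Y) := ⟨P n x, hPx_mem, rfl⟩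
    have h2 : ‖w - projCl ((Xn n).map (A : X →ₗ[ℂ] Y)) w‖ ≤ ‖w - A (P n x)‖ :=
      projCl_min w hAPx_mem
    have h3 : ‖w - A (P n x)‖ < ε / 3 := by
      rw [← hx, norm_sub_rev, ← dist_eq_norm]
      exact hN n hn
    have h4 : ‖projCl ((Xn n).map (A : X →ₗ[ℂ] Y)) (q - w)‖ ≤ ‖q - w‖ := projCl_norm_apply_le _ _
    rw [dist_eq_norm]
    have hdecomp : projCl ((Xn n).map (A : X →ₗ[ℂ] Y)) q - q =
        projCl ((Xn n).map (A : X →ₗ[ℂ] Y)) (q - w) + (projCl ((Xn n).map (A : X →ₗ[ℂ] Y)) w - w) + (w - q) := by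
      rw [map_sub]; abel
    calc ‖projCl ((Xn n).map (A : X →ₗ[ℂ] Y)) q - q‖
        ≤ ‖projCl ((Xn n).map (A : X →ₗ[ℂ] Y)) (q - w)‖ + ‖projCl ((Xn n).map (A : X →ₗ[ℂ] Y)) w - w‖ + ‖w - q‖ := by
          rw [hdecomp]; exact norm_add₃_le
      _ < ε / 3 + ε / 3 + ε / 3 := by
          have hqw : ‖q - w‖ < ε / 3 := by rw [← dist_eq_norm]; exact hwq
          have hwq' : ‖w - q‖ < ε / 3 := by rwa [norm_sub_rev]
          have h5 : ‖projCl ((Xn n).map (A : X →ₗ[ℂ] Y)) w - w‖ < ε / 3 := by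
            rw [norm_sub_rev]; exact lt_of_le_of_lt h2 h3
          gcongr
          exact lt_of_le_of_lt h4 hqw
      _ = ε := by ring
end
end

section
/- Let X, Y be Hilbert spaces, A : X → Y bounded linear, Pₙ orthogonal projections onto closed subspaces Xₙ ⊆ X with Pₙ → I_X strongly, Qₙ orthogonal projections onto closed subspaces Yₙ ⊆ Y with Qₙ → I_Y strongly. Let Aₙ := Qₙ A Pₙ : Xₙ → Yₙ and let Q⁽ⁿ⁾ denote the orthogonal projection of Yₙ onto the closure of the range of Aₙ. Then for every y in the closure of the range of A, Q⁽ⁿ⁾ Qₙ y → y strongly as n → ∞. -/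
noncomputable section
open ContinuousLinearMap Submodule Filter Topology MeasureTheory

private lemma orthproj_norm_le' {E : Type*} [NormedAddCommGroup E] [InnerProductSpace ℂ E]
    [CompleteSpace E] {P : E →L[ℂ] E} (h1 : P ∘L P = P)
    (h2 : ContinuousLinearMap.adjoint P = P) (v : E) : ‖P v‖ ≤ ‖v‖ := by
  by_cases h : ‖P v‖ = 0
  · simp [h, norm_nonneg]
  have key : (inner ℂ (P v) (P v) : ℂ) = inner ℂ v (P v) := by
    calc (inner ℂ (P v) (P v) : ℂ) = inner ℂ ((ContinuousLinearMap.adjoint P) v) (P v) := by rw [h2]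
    _ = inner ℂ v (P (P v)) := ContinuousLinearMap.adjoint_inner_left P _ _
    _ = inner ℂ v (P v) := by
        have : P (P v) = P v := by
          rw [← ContinuousLinearMap.comp_apply, h1]
        rw [this]
  have h3 : ‖P v‖ ^ 2 = ‖(inner ℂ v (P v) : ℂ)‖ := by
    rw [← key, inner_self_eq_norm_sq_to_K]
    simp [pow_two]
  have h4 : ‖(inner ℂ v (P v) : ℂ)‖ ≤ ‖v‖ * ‖P v‖ := norm_inner_le_norm v (P v)
  nlinarith [norm_nonneg (P v), norm_nonneg v]

private lemma projCl_min' {E : Type*} [NormedAddCommGroup E] [InnerProductSpace ℂ E]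
    [CompleteSpace E]
    (K : Submodule ℂ E) (w z : E) (hz : z ∈ K) : ‖w - projCl K w‖ ≤ ‖w - z‖ := by
  haveI : CompleteSpace K.topologicalClosure := K.isClosed_topologicalClosure.completeSpace_coe
  have : projCl K w = (orthogonalProjection K.topologicalClosure w : E) := rfl
  rw [this, ← Submodule.starProjection_apply, Submodule.starProjection_minimal]
  exact ciInf_le ⟨0, by rintro r ⟨u, rfl⟩; positivity⟩
    (⟨z, K.le_topologicalClosure hz⟩ : K.topologicalClosure)

/-- Lemma 2.2: with `Aₙ := Qₙ A Pₙ` and `Q⁽ⁿ⁾` the orthogonal projection onto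
the closure of the range of `Aₙ`, for every `y` in the closure of the range of `A` we have
`Q⁽ⁿ⁾ Qₙ y → y`. -/
theorem stmt1 {X Y : Type*} [NormedAddCommGroup X] [InnerProductSpace ℂ X] [CompleteSpace X]
    [NormedAddCommGroup Y] [InnerProductSpace ℂ Y] [CompleteSpace Y]
    (A : X →L[ℂ] Y) (Xn : ℕ → Submodule ℂ X) (Yn : ℕ → Submodule ℂ Y)
    (hXn : ∀ n, IsClosed (Xn n : Set X)) (hYn : ∀ n, IsClosed (Yn n : Set Y))
    (P : ℕ → X →L[ℂ] X) (Q : ℕ → Y →L[ℂ] Y)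
    (hP : ∀ n, IsOrthProj (P n) (Xn n)) (hQ : ∀ n, IsOrthProj (Q n) (Yn n))
    (hPconv : ∀ x : X, Filter.Tendsto (fun n => P n x) atTop (nhds x))
    (hQconv : ∀ y : Y, Filter.Tendsto (fun n => Q n y) atTop (nhds y))
    (An : ℕ → X →L[ℂ] Y) (hAn : ∀ n, An n = Q n ∘L A ∘L P n)
    (y : Y) (hy : y ∈ (LinearMap.range (A : X →ₗ[ℂ] Y)).topologicalClosure) :
    Filter.Tendsto (fun n => projCl (LinearMap.range (An n : X →ₗ[ℂ] Y)) (Q n y)) atTop (nhds y) := by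
  rw [Metric.tendsto_atTop]
  intro eps heps
  -- choose x with ‖y - A x‖ < eps/3
  have hy' : y ∈ closure ((LinearMap.range (A : X →ₗ[ℂ] Y) : Submodule ℂ Y) : Set Y) := by
    rw [← Submodule.topologicalClosure_coe]; exact hy
  obtain ⟨w, hw, hwy⟩ := Metric.mem_closure_iff.mp hy' (eps/3) (by linarith)
  obtain ⟨x, rfl⟩ := hw
  -- eventual bounds
  have hQy := (Metric.tendsto_atTop.mp (hQconv y)) (eps/3) (by linarith)
  obtain ⟨N1, hN1⟩ := hQy
  have hApos : (0:ℝ) < ‖A‖ + 1 := by positivity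
  have hPx := (Metric.tendsto_atTop.mp (hPconv x)) (eps/(3*(‖A‖+1)))
    (by positivity)
  obtain ⟨N2, hN2⟩ := hPx
  refine ⟨max N1 N2, fun n hn => ?_⟩
  have hn1 := hN1 n (le_trans (le_max_left _ _) hn)
  have hn2 := hN2 n (le_trans (le_max_right _ _) hn)
  rw [dist_eq_norm] at hn1 hn2 ⊢
  have hmem : An n x ∈ LinearMap.range (An n : X →ₗ[ℂ] Y) := ⟨x, rfl⟩
  have key1 : ‖Q n y - projCl (LinearMap.range (An n : X →ₗ[ℂ] Y)) (Q n y)‖ ≤ ‖Q n y - An n x‖ :=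
    projCl_min' _ _ _ hmem
  have key2 : ‖Q n y - An n x‖ ≤ ‖y - A (P n x)‖ := by
    have : Q n y - An n x = Q n (y - A (P n x)) := by
      rw [hAn n]; simp [map_sub]
    rw [this]
    exact orthproj_norm_le' (hQ n).1 (hQ n).2.1 _
  have key3 : ‖y - A (P n x)‖ ≤ ‖y - A x‖ + ‖A‖ * ‖P n x - x‖ := by
    have : y - A (P n x) = (y - A x) + A (x - P n x) := by
      rw [map_sub]; abel
    rw [this]
    calc ‖(y - A x) + A (x - P n x)‖ ≤ ‖y - A x‖ + ‖A (x - P n x)‖ := norm_add_le _ _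
      _ ≤ ‖y - A x‖ + ‖A‖ * ‖x - P n x‖ := by
          gcongr; exact A.le_opNorm _
      _ = ‖y - A x‖ + ‖A‖ * ‖P n x - x‖ := by rw [norm_sub_rev x]
  have key4 : ‖A‖ * ‖P n x - x‖ < eps/3 := by
    calc ‖A‖ * ‖P n x - x‖ ≤ (‖A‖+1) * ‖P n x - x‖ :=
          mul_le_mul_of_nonneg_right (by linarith) (norm_nonneg _)
      _ < (‖A‖+1) * (eps/(3*(‖A‖+1))) := mul_lt_mul_of_pos_left hn2 hApos
      _ = eps/3 := by field_simp
  have hyAx : ‖y - A x‖ < eps/3 := by rwa [← dist_eq_norm]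
  calc ‖projCl (LinearMap.range (An n : X →ₗ[ℂ] Y)) (Q n y) - y‖
      ≤ ‖projCl (LinearMap.range (An n : X →ₗ[ℂ] Y)) (Q n y) - Q n y‖ + ‖Q n y - y‖ :=
        norm_sub_le_norm_sub_add_norm_sub _ _ _
    _ = ‖Q n y - projCl (LinearMap.range (An n : X →ₗ[ℂ] Y)) (Q n y)‖ + ‖Q n y - y‖ := by
        rw [norm_sub_rev]
    _ ≤ ‖y - A (P n x)‖ + ‖Q n y - y‖ := by gcongr; exact le_trans key1 key2
    _ ≤ (‖y - A x‖ + ‖A‖ * ‖P n x - x‖) + ‖Q n y - y‖ := by gcongr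
    _ < eps/3 + eps/3 + eps/3 := by gcongr
    _ = eps := by ring
end
end

section
/- In the setting of the Petrov–Galerkin approximation (Pₙ → I_X, Qₙ → I_Y strongly, Aₙ := Qₙ A Pₙ : Xₙ → Yₙ with closed range, Aₙ† the Moore–Penrose inverse), if b ∈ Y does not lie in R(A) ⊕ R(A)^⊥ (i.e., b ∉ D(A†)), then ‖Aₙ† Qₙ Q_{cl(R(A))} b‖ → ∞ as n → ∞, where Q_{cl(R(A))} is the orthogonal projection onto the closure of the range of A. -/
noncomputable section
open ContinuousLinearMap Submodule Filter Topology MeasureTheory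
open scoped InnerProductSpace

section Aux
variable {E F : Type*} [NormedAddCommGroup E] [InnerProductSpace ℂ E] [CompleteSpace E]
  [NormedAddCommGroup F] [InnerProductSpace ℂ F] [CompleteSpace F]

variable {E F : Type*} [NormedAddCommGroup E] [InnerProductSpace ℂ E] [CompleteSpace E]
  [NormedAddCommGroup F] [InnerProductSpace ℂ F] [CompleteSpace F]

lemma myProj_norm_le {P : E →L[ℂ] E} (h1 : ∀ x, P (P x) = P x) (h2 : adjoint P = P) (x : E) :
    ‖P x‖ ≤ ‖x‖ := by
  have h3 : ⟪P x, P x⟫_ℂ = ⟪x, P x⟫_ℂ := by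
    calc ⟪P x, P x⟫_ℂ = ⟪adjoint P x, P x⟫_ℂ := by rw [h2]
    _ = ⟪x, P (P x)⟫_ℂ := adjoint_inner_left P (P x) x
    _ = ⟪x, P x⟫_ℂ := by rw [h1]
  have h4 : ‖P x‖ ^ 2 = RCLike.re ⟪x, P x⟫_ℂ := by
    rw [← inner_self_eq_norm_sq (𝕜 := ℂ), h3]
  have h5 : RCLike.re ⟪x, P x⟫_ℂ ≤ ‖x‖ * ‖P x‖ := by
    calc RCLike.re ⟪x, P x⟫_ℂ ≤ ‖⟪x, P x⟫_ℂ‖ := RCLike.re_le_norm _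
    _ ≤ ‖x‖ * ‖P x‖ := norm_inner_le_norm _ _
  nlinarith [norm_nonneg (P x), norm_nonneg x]

lemma myProj_dist_le {P : E →L[ℂ] E} (h1 : ∀ x, P (P x) = P x) (h2 : adjoint P = P) (y z : E)
    (hz : P z = z) : ‖y - P y‖ ≤ ‖y - z‖ := by
  set w := y - P y with hw
  have hPw : P w = 0 := by
    simp only [hw, map_sub]
    rw [h1, sub_self]
  have horth : ⟪w, z - P y⟫_ℂ = 0 := by
    have heq : z - P y = P (z - y) := by rw [map_sub, hz]
    rw [heq]
    calc ⟪w, P (z - y)⟫_ℂ = ⟪adjoint P w, z - y⟫_ℂ := (adjoint_inner_left P (z - y) w).symm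
    _ = 0 := by rw [h2, hPw, inner_zero_left]
  have hdec : ⟪w, w⟫_ℂ = ⟪w, y - z⟫_ℂ := by
    have heq : w = (y - z) + (z - P y) := by rw [hw]; abel
    calc ⟪w, w⟫_ℂ = ⟪w, (y - z) + (z - P y)⟫_ℂ := by rw [← heq]
    _ = ⟪w, y - z⟫_ℂ + ⟪w, z - P y⟫_ℂ := inner_add_right _ _ _
    _ = ⟪w, y - z⟫_ℂ := by rw [horth, add_zero]
  have h4 : ‖w‖ ^ 2 = RCLike.re ⟪w, y - z⟫_ℂ := by
    rw [← inner_self_eq_norm_sq (𝕜 := ℂ), hdec]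
  have h5 : RCLike.re ⟪w, y - z⟫_ℂ ≤ ‖w‖ * ‖y - z‖ := by
    calc RCLike.re ⟪w, y - z⟫_ℂ ≤ ‖⟪w, y - z⟫_ℂ‖ := RCLike.re_le_norm _
    _ ≤ ‖w‖ * ‖y - z‖ := norm_inner_le_norm _ _
  nlinarith [norm_nonneg w, norm_nonneg (y - z)]

omit [CompleteSpace E] in
lemma myTendsto_proj_comp (f : ℕ → E →L[ℂ] E) (hc : ∀ n x, ‖f n x‖ ≤ ‖x‖)
    (hconv : ∀ x, Tendsto (fun n => f n x) atTop (𝓝 x)) {z : ℕ → E} {z₀ : E}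
    (hz : Tendsto z atTop (𝓝 z₀)) : Tendsto (fun n => f n (z n)) atTop (𝓝 z₀) := by
  rw [tendsto_iff_norm_sub_tendsto_zero] at hz ⊢
  have hbound : ∀ n, ‖f n (z n) - z₀‖ ≤ ‖z n - z₀‖ + ‖f n z₀ - z₀‖ := by
    intro n
    calc ‖f n (z n) - z₀‖ = ‖f n (z n - z₀) + (f n z₀ - z₀)‖ := by rw [map_sub]; congr 1; abel
    _ ≤ ‖f n (z n - z₀)‖ + ‖f n z₀ - z₀‖ := norm_add_le _ _
    _ ≤ ‖z n - z₀‖ + ‖f n z₀ - z₀‖ := by gcongr; exact hc n _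
  have hlim : Tendsto (fun n => ‖z n - z₀‖ + ‖f n z₀ - z₀‖) atTop (𝓝 0) := by
    have h2 := (hconv z₀)
    rw [tendsto_iff_norm_sub_tendsto_zero] at h2
    simpa using hz.add h2
  exact squeeze_zero (fun n => norm_nonneg _) hbound hlim

end Aux

set_option maxHeartbeats 2000000 in
theorem stmt2' {X Y : Type*} [NormedAddCommGroup X] [InnerProductSpace ℂ X] [CompleteSpace X]
    [NormedAddCommGroup Y] [InnerProductSpace ℂ Y] [CompleteSpace Y]
    (hX : ¬ FiniteDimensional ℂ X) (hY : ¬ FiniteDimensional ℂ Y)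
    (A : X →L[ℂ] Y) (Xn : ℕ → Submodule ℂ X) (Yn : ℕ → Submodule ℂ Y)
    (hXn : ∀ n, IsClosed (Xn n : Set X)) (hYn : ∀ n, IsClosed (Yn n : Set Y))
    (P : ℕ → X →L[ℂ] X) (Q : ℕ → Y →L[ℂ] Y)
    (hP : ∀ n, (P n ∘L P n = P n ∧ ContinuousLinearMap.adjoint (P n) = P n ∧ LinearMap.range (P n : X →ₗ[ℂ] X) = Xn n))
    (hQ : ∀ n, (Q n ∘L Q n = Q n ∧ ContinuousLinearMap.adjoint (Q n) = Q n ∧ LinearMap.range (Q n : Y →ₗ[ℂ] Y) = Yn n))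
    (hPconv : ∀ x : X, Filter.Tendsto (fun n => P n x) atTop (nhds x))
    (hQconv : ∀ y : Y, Filter.Tendsto (fun n => Q n y) atTop (nhds y))
    (An : ℕ → X →L[ℂ] Y) (hAn : ∀ n, An n = Q n ∘L A ∘L P n)
    (hRanAn : ∀ n, IsClosed (LinearMap.range (An n : X →ₗ[ℂ] Y) : Set Y))
    (B : ℕ → Y →L[ℂ] X)
    (hB : ∀ n, (An n ∘L B n ∘L An n = An n ∧ B n ∘L An n ∘L B n = B n ∧
      ContinuousLinearMap.adjoint (An n ∘L B n) = An n ∘L B n ∧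
      ContinuousLinearMap.adjoint (B n ∘L An n) = B n ∘L An n))
    (b : Y) (hb : b ∉ LinearMap.range (A : X →ₗ[ℂ] Y) ⊔ (LinearMap.range (A : X →ₗ[ℂ] Y))ᗮ)
    (y : Y)
    (hycl : y ∈ closure ((LinearMap.range (A : X →ₗ[ℂ] Y) : Submodule ℂ Y) : Set Y))
    (hby : b - y ∈ (LinearMap.range (A : X →ₗ[ℂ] Y))ᗮ) :
    Filter.Tendsto (fun n => ‖B n (Q n y)‖) atTop atTop := by
  classical
  set K := LinearMap.range (A : X →ₗ[ℂ] Y) with hK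
  -- pointwise idempotence
  have hQQ : ∀ n (z : Y), Q n (Q n z) = Q n z := by
    intro n z
    calc Q n (Q n z) = (Q n ∘L Q n) z := rfl
    _ = Q n z := by rw [(hQ n).1]
  have hPP : ∀ n (z : X), P n (P n z) = P n z := by
    intro n z
    calc P n (P n z) = (P n ∘L P n) z := rfl
    _ = P n z := by rw [(hP n).1]
  have hQc : ∀ n (z : Y), ‖Q n z‖ ≤ ‖z‖ := fun n => myProj_norm_le (hQQ n) (hQ n).2.1
  have hPc : ∀ n (z : X), ‖P n z‖ ≤ ‖z‖ := fun n => myProj_norm_le (hPP n) (hP n).2.1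
  have hQAn : ∀ n, Q n ∘L An n = An n := by
    intro n
    rw [hAn n]
    ext z
    simp only [comp_apply]
    exact hQQ n _
  have hPIsa : ∀ n, adjoint (An n ∘L B n) = An n ∘L B n := fun n => (hB n).2.2.1
  have hPIQ : ∀ n, (An n ∘L B n) ∘L Q n = An n ∘L B n := by
    intro n
    have h5 : adjoint ((An n ∘L B n) ∘L Q n) = An n ∘L B n := by
      rw [adjoint_comp, (hQ n).2.1, hPIsa n, ← comp_assoc, hQAn n]
    calc (An n ∘L B n) ∘L Q n = adjoint (adjoint ((An n ∘L B n) ∘L Q n)) :=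
      (adjoint_adjoint _).symm
    _ = adjoint (An n ∘L B n) := by rw [h5]
    _ = An n ∘L B n := hPIsa n
  have hBAB : ∀ n (w : Y), B n (An n (B n w)) = B n w := by
    intro n w
    calc B n (An n (B n w)) = (B n ∘L An n ∘L B n) w := rfl
    _ = B n w := by rw [(hB n).2.1]
  have hBQ : ∀ n (z : Y), B n (Q n z) = B n z := by
    intro n z
    have hPI : An n (B n (Q n z)) = An n (B n z) := by
      calc An n (B n (Q n z)) = ((An n ∘L B n) ∘L Q n) z := rfl
      _ = (An n ∘L B n) z := by rw [hPIQ n]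
      _ = An n (B n z) := rfl
    calc B n (Q n z) = B n (An n (B n (Q n z))) := (hBAB n _).symm
    _ = B n (An n (B n z)) := by rw [hPI]
    _ = B n z := hBAB n z
  simp only [hBQ]
  -- strong convergence facts
  have hAnconv : ∀ u : X, Tendsto (fun n => An n u) atTop (𝓝 (A u)) := by
    intro u
    have h1 : Tendsto (fun n => A (P n u)) atTop (𝓝 (A u)) :=
      (A.continuous.tendsto u).comp (hPconv u)
    have h2 := myTendsto_proj_comp Q hQc hQconv h1
    simp only [hAn, comp_apply]
    exact h2
  have hadjconv : ∀ v : Y, Tendsto (fun n => adjoint (An n) v) atTop (𝓝 (adjoint A v)) := by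
    intro v
    have h1 : Tendsto (fun n => adjoint A (Q n v)) atTop (𝓝 (adjoint A v)) :=
      ((adjoint A).continuous.tendsto v).comp (hQconv v)
    have h2 := myTendsto_proj_comp P hPc hPconv h1
    have h3 : ∀ n, adjoint (An n) v = P n (adjoint A (Q n v)) := by
      intro n
      rw [hAn n]
      simp only [adjoint_comp, (hP n).2.1, (hQ n).2.1, comp_apply]
    simp only [h3]
    exact h2
  -- Π_n y → y
  have hPIid : ∀ n (w : Y), (An n ∘L B n) ((An n ∘L B n) w) = (An n ∘L B n) w := by
    intro n w
    show An n (B n (An n (B n w))) = An n (B n w)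
    rw [hBAB n w]
  have hPIy : Tendsto (fun n => An n (B n y)) atTop (𝓝 y) := by
    rw [Metric.tendsto_atTop]
    intro ε hε
    obtain ⟨z, hzK, hzy⟩ := Metric.mem_closure_iff.mp hycl (ε / 2) (by positivity)
    rw [SetLike.mem_coe, hK, LinearMap.mem_range] at hzK
    obtain ⟨u, rfl⟩ := hzK
    have hAu := hAnconv u
    rw [Metric.tendsto_atTop] at hAu
    obtain ⟨N, hN⟩ := hAu (ε / 2) (by positivity)
    refine ⟨N, fun n hn => ?_⟩
    have hz' : (An n ∘L B n) (An n u) = An n u := by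
      calc (An n ∘L B n) (An n u) = (An n ∘L B n ∘L An n) u := rfl
      _ = An n u := by rw [(hB n).1]
    have hdist := myProj_dist_le (hPIid n) (hPIsa n) y (An n u) hz'
    have : (An n ∘L B n) y = An n (B n y) := rfl
    rw [this] at hdist
    rw [dist_eq_norm, norm_sub_rev]
    calc ‖y - An n (B n y)‖ ≤ ‖y - An n u‖ := hdist
    _ ≤ ‖y - A u‖ + ‖A u - An n u‖ := by
        have : y - An n u = (y - A u) + (A u - An n u) := by abel
        rw [this]; exact norm_add_le _ _
    _ < ε / 2 + ε / 2 := by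
        apply add_lt_add
        · rw [← dist_eq_norm]; exact hzy
        · rw [← dist_eq_norm, dist_comm]; exact hN n hn
    _ = ε := by ring
  -- ultrafilter argument
  by_contra hcon
  rw [tendsto_atTop] at hcon
  push_neg at hcon
  obtain ⟨M, hM⟩ := hcon
  set S := {n : ℕ | ‖B n y‖ < M} with hS
  haveI hne : (atTop ⊓ 𝓟 S).NeBot := frequently_iff_neBot.mp hM
  set U := Ultrafilter.of (atTop ⊓ 𝓟 S) with hU
  have hUle : (U : Filter ℕ) ≤ atTop ⊓ 𝓟 S := Ultrafilter.of_le _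
  have hUtop : (U : Filter ℕ) ≤ atTop := hUle.trans inf_le_left
  have hUS : S ∈ (U : Filter ℕ) := hUle (mem_inf_of_right (mem_principal_self S))
  have hM0 : 0 ≤ M := by
    obtain ⟨n, hn⟩ := hM.exists
    exact le_trans (norm_nonneg _) hn.le
  have hex : ∀ v : X, ∃ c : ℂ, Tendsto (fun n => ⟪B n y, v⟫_ℂ) (U : Filter ℕ) (𝓝 c) := by
    intro v
    have hcpt : IsCompact (Metric.closedBall (0 : ℂ) (M * ‖v‖)) := isCompact_closedBall _ _
    have hle : ↑(Ultrafilter.map (fun n => ⟪B n y, v⟫_ℂ) U) ≤ 𝓟 (Metric.closedBall (0 : ℂ) (M * ‖v‖)) := by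
      rw [le_principal_iff]
      rw [Ultrafilter.mem_coe, Ultrafilter.mem_map]
      apply Filter.mem_of_superset hUS
      intro n hn
      simp only [Set.mem_preimage, Metric.mem_closedBall, dist_zero_right]
      calc ‖⟪B n y, v⟫_ℂ‖ ≤ ‖B n y‖ * ‖v‖ := norm_inner_le_norm _ _
      _ ≤ M * ‖v‖ := mul_le_mul_of_nonneg_right (le_of_lt hn) (norm_nonneg v)
    obtain ⟨c, -, hc⟩ := hcpt.ultrafilter_le_nhds _ hle
    refine ⟨c, ?_⟩
    rwa [Ultrafilter.coe_map] at hc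
  choose φ hφ using hex
  have hbound : ∀ v, ‖φ v‖ ≤ M * ‖v‖ := by
    intro v
    refine le_of_tendsto (hφ v).norm ?_
    apply Filter.mem_of_superset hUS
    intro n hn
    calc ‖⟪B n y, v⟫_ℂ‖ ≤ ‖B n y‖ * ‖v‖ := norm_inner_le_norm _ _
    _ ≤ M * ‖v‖ := mul_le_mul_of_nonneg_right (le_of_lt hn) (norm_nonneg v)
  let Φ : X →ₗ[ℂ] ℂ :=
    { toFun := φ
      map_add' := fun v w => tendsto_nhds_unique (hφ (v + w))
        (by simpa only [inner_add_right] using (hφ v).add (hφ w))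
      map_smul' := fun c v => tendsto_nhds_unique (hφ (c • v))
        (by simpa only [inner_smul_right, RingHom.id_apply, smul_eq_mul] using (hφ v).const_mul c) }
  let Φc : X →L[ℂ] ℂ := Φ.mkContinuous M hbound
  set x₀ : X := (InnerProductSpace.toDual ℂ X).symm Φc with hx₀
  have hx₀inner : ∀ v, ⟪x₀, v⟫_ℂ = φ v := by
    intro v
    have h1 : InnerProductSpace.toDual ℂ X x₀ v = Φc v := by
      rw [hx₀, LinearIsometryEquiv.apply_symm_apply]
    rw [← InnerProductSpace.toDual_apply_apply]
    exact h1
  have hkey : ∀ v : Y, ⟪A x₀, v⟫_ℂ = ⟪y, v⟫_ℂ := by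
    intro v
    have e1 : ⟪A x₀, v⟫_ℂ = φ (adjoint A v) := by
      rw [← adjoint_inner_right, hx₀inner]
    rw [e1]
    refine tendsto_nhds_unique (hφ (adjoint A v)) ?_
    have t1 : Tendsto (fun n => ⟪B n y, adjoint (An n) v⟫_ℂ) (U : Filter ℕ) (𝓝 ⟪y, v⟫_ℂ) := by
      have heq : ∀ n, ⟪B n y, adjoint (An n) v⟫_ℂ = ⟪An n (B n y), v⟫_ℂ :=
        fun n => adjoint_inner_right (An n) _ v
      simp only [heq]
      exact (hPIy.mono_left hUtop).inner tendsto_const_nhds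
    have t2 : Tendsto (fun n => ⟪B n y, adjoint A v - adjoint (An n) v⟫_ℂ) (U : Filter ℕ) (𝓝 0) := by
      rw [tendsto_zero_iff_norm_tendsto_zero]
      have hev : ∀ᶠ n in (U : Filter ℕ),
          ‖⟪B n y, adjoint A v - adjoint (An n) v⟫_ℂ‖ ≤ M * ‖adjoint A v - adjoint (An n) v‖ := by
        apply Filter.mem_of_superset hUS
        intro n hn
        calc ‖⟪B n y, adjoint A v - adjoint (An n) v⟫_ℂ‖
            ≤ ‖B n y‖ * ‖adjoint A v - adjoint (An n) v‖ := norm_inner_le_norm _ _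
        _ ≤ M * ‖adjoint A v - adjoint (An n) v‖ :=
            mul_le_mul_of_nonneg_right (le_of_lt hn) (norm_nonneg _)
      have h2 : Tendsto (fun n => ‖adjoint A v - adjoint (An n) v‖) atTop (𝓝 0) := by
        have h3 := hadjconv v
        rw [tendsto_iff_norm_sub_tendsto_zero] at h3
        simpa [norm_sub_rev] using h3
      have h4 : Tendsto (fun n => M * ‖adjoint A v - adjoint (An n) v‖) (U : Filter ℕ) (𝓝 0) := by
        simpa using ((h2.const_mul M).mono_left hUtop)
      exact squeeze_zero' (Filter.Eventually.of_forall fun n => norm_nonneg _) hev h4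
    have t3 := t1.add t2
    have hfun : (fun n => ⟪B n y, adjoint (An n) v⟫_ℂ + ⟪B n y, adjoint A v - adjoint (An n) v⟫_ℂ)
        = fun n => ⟪B n y, adjoint A v⟫_ℂ := by
      funext n
      rw [← inner_add_right]
      congr 1
      abel
    rw [hfun] at t3
    simpa using t3
  have hAx : A x₀ = y := ext_inner_right ℂ hkey
  have hyK : y ∈ K := ⟨x₀, hAx⟩
  exact hb (by simpa using Submodule.add_mem_sup hyK hby)

/-- Theorem 1.1 (a): in the Petrov–Galerkin setting, if
`b ∉ R(A) ⊕ R(A)^⊥ = D(A†)` then `‖Aₙ† Qₙ Q_{cl R(A)} b‖ → ∞`. -/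
theorem stmt2 {X Y : Type*} [NormedAddCommGroup X] [InnerProductSpace ℂ X] [CompleteSpace X]
    [NormedAddCommGroup Y] [InnerProductSpace ℂ Y] [CompleteSpace Y]
    (hX : ¬ FiniteDimensional ℂ X) (hY : ¬ FiniteDimensional ℂ Y)
    (A : X →L[ℂ] Y) (Xn : ℕ → Submodule ℂ X) (Yn : ℕ → Submodule ℂ Y)
    (hXn : ∀ n, IsClosed (Xn n : Set X)) (hYn : ∀ n, IsClosed (Yn n : Set Y))
    (P : ℕ → X →L[ℂ] X) (Q : ℕ → Y →L[ℂ] Y)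
    (hP : ∀ n, IsOrthProj (P n) (Xn n)) (hQ : ∀ n, IsOrthProj (Q n) (Yn n))
    (hPconv : ∀ x : X, Filter.Tendsto (fun n => P n x) atTop (nhds x))
    (hQconv : ∀ y : Y, Filter.Tendsto (fun n => Q n y) atTop (nhds y))
    (An : ℕ → X →L[ℂ] Y) (hAn : ∀ n, An n = Q n ∘L A ∘L P n)
    (hRanAn : ∀ n, IsClosed (LinearMap.range (An n : X →ₗ[ℂ] Y) : Set Y))
    (B : ℕ → Y →L[ℂ] X) (hB : ∀ n, IsMPInv (An n) (B n))
    (b : Y) (hb : b ∉ LinearMap.range (A : X →ₗ[ℂ] Y) ⊔ (LinearMap.range (A : X →ₗ[ℂ] Y))ᗮ) :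
    Filter.Tendsto (fun n => ‖B n (Q n (projCl (LinearMap.range (A : X →ₗ[ℂ] Y)) b))‖) atTop atTop := by
  haveI : CompleteSpace (LinearMap.range (A : X →ₗ[ℂ] Y)).topologicalClosure :=
    (LinearMap.range (A : X →ₗ[ℂ] Y)).isClosed_topologicalClosure.completeSpace_coe
  set K := LinearMap.range (A : X →ₗ[ℂ] Y) with hK
  have hdef : projCl K b = ((orthogonalProjection K.topologicalClosure b : K.topologicalClosure) : Y) := rfl
  refine stmt2' hX hY A Xn Yn hXn hYn P Q (fun n => hP n) (fun n => hQ n) hPconv hQconv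
    An hAn hRanAn B (fun n => hB n) b hb (projCl K b) ?_ ?_
  · rw [hdef, ← Submodule.topologicalClosure_coe]
    exact (orthogonalProjection K.topologicalClosure b).2
  · have h1 : b - ((orthogonalProjection K.topologicalClosure b : K.topologicalClosure) : Y)
        ∈ (K.topologicalClosure)ᗮ := Submodule.sub_starProjection_mem_orthogonal (K := K.topologicalClosure) b
    rw [hdef]
    exact Submodule.orthogonal_le K.le_topologicalClosure h1
end
end

section
/- In the Petrov–Galerkin setting (Pₙ → I_X, Qₙ → I_Y strongly, Aₙ := Qₙ A Pₙ with closed range), if b belongs to the closure of R(A) but not to R(A), then ‖Aₙ† Qₙ b‖ → ∞ as n → ∞. -/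
/-!
Suppose `‖Aₙ† Qₙ b‖ ≤ C` for infinitely many `n`. The Moore–Penrose identity
`⟪Aₙ† y, Aₙ* Aₙ u⟫ = ⟪y, Aₙ u⟫` and the strong convergences `Aₙ → A`, `Aₙ* Aₙ → A* A`
(the projections are contractions) give `|⟪A* b, u⟫| ≤ C ‖A* A u‖` for every `u`. Thus
`u ↦ ⟪A* b, u⟫` factors boundedly through `A* A`; by Hahn–Banach and Riesz, `A* b = A* A v` for
some `v`. Then `b - A v` lies in `cl R(A) ∩ R(A)ᗮ = 0`, so `b = A v ∈ R(A)`.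
-/

noncomputable section
open ContinuousLinearMap Submodule Filter Topology MeasureTheory

theorem IsOrthProj.norm_le_one {E : Type*} [NormedAddCommGroup E] [InnerProductSpace ℂ E]
    [CompleteSpace E] {P : E →L[ℂ] E} {K : Submodule ℂ E} (hP : IsOrthProj P K) : ‖P‖ ≤ 1 :=
  IsStarProjection.norm_le P ⟨hP.1, hP.2.1⟩

theorem IsMPInv.inner_apply_adjoint_apply {E F : Type*} [NormedAddCommGroup E]
    [InnerProductSpace ℂ E] [CompleteSpace E] [NormedAddCommGroup F] [InnerProductSpace ℂ F]
    [CompleteSpace F] {T : E →L[ℂ] F} {B : F →L[ℂ] E} (hB : IsMPInv T B) (y : F) (x : E) :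
    inner ℂ (B y) (adjoint T (T x)) = inner ℂ y (T x) := by
  obtain ⟨hTBT, -, hTB, -⟩ := hB
  calc inner ℂ (B y) (adjoint T (T x)) = inner ℂ (adjoint (T ∘L B) y) (T x) := by
        rw [hTB, adjoint_inner_right]; rfl
    _ = inner ℂ y ((T ∘L B ∘L T) x) := adjoint_inner_left _ _ _
    _ = inner ℂ y (T x) := by rw [hTBT]

theorem tendsto_apply_of_norm_le {ι 𝕜 E F : Type*} [RCLike 𝕜] [NormedAddCommGroup E]
    [NormedSpace 𝕜 E] [NormedAddCommGroup F] [NormedSpace 𝕜 F] {l : Filter ι}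
    {T : ι → E →L[𝕜] F} {K : ℝ} (hT : ∀ i, ‖T i‖ ≤ K) {x : E} {z : F}
    (hTx : Tendsto (fun i => T i x) l (𝓝 z)) {y : ι → E}
    (hy : Tendsto y l (𝓝 x)) : Tendsto (fun i => T i (y i)) l (𝓝 z) := by
  have hsmall : Tendsto (fun i => T i (y i - x)) l (𝓝 0) := by
    refine squeeze_zero_norm (fun i => ?_)
      (by simpa using (tendsto_sub_nhds_zero_iff.2 hy).norm.const_mul K)
    exact (T i).le_opNorm _ |>.trans (mul_le_mul_of_nonneg_right (hT i) (norm_nonneg _))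
  simpa using hTx.add hsmall

section RangeCriterion

variable {𝕜 E F : Type*} [RCLike 𝕜] [NormedAddCommGroup E] [InnerProductSpace 𝕜 E]
  [CompleteSpace E] [NormedAddCommGroup F] [InnerProductSpace 𝕜 F] [CompleteSpace F]

theorem exists_adjoint_apply_eq_of_norm_inner_le (T : E →L[𝕜] F) (y : E) (C : ℝ)
    (h : ∀ x, ‖inner 𝕜 y x‖ ≤ C * ‖T x‖) : ∃ v, adjoint T v = y := by
  have hker : LinearMap.ker (T : E →ₗ[𝕜] F) ≤ LinearMap.ker (innerₛₗ 𝕜 y) := fun x hx => by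
    simpa [norm_le_zero_iff, show T x = 0 from hx] using h x
  let g : LinearMap.range (T : E →ₗ[𝕜] F) →ₗ[𝕜] 𝕜 :=
    ((LinearMap.ker (T : E →ₗ[𝕜] F)).liftQ (innerₛₗ 𝕜 y) hker).comp
      (T : E →ₗ[𝕜] F).quotKerEquivRange.symm.toLinearMap
  have hg : ∀ x, g ⟨T x, x, rfl⟩ = inner 𝕜 y x := fun x =>
    congrArg ((LinearMap.ker (T : E →ₗ[𝕜] F)).liftQ (innerₛₗ 𝕜 y) hker)
      ((T : E →ₗ[𝕜] F).quotKerEquivRange_symm_apply_image x ⟨x, rfl⟩)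
  obtain ⟨Φ, hΦ, -⟩ := exists_extension_norm_eq _ <|
    g.mkContinuous C fun ⟨_, x, hx⟩ => by subst hx; simpa [hg] using h x
  refine ⟨(InnerProductSpace.toDual 𝕜 F).symm Φ, ext_inner_right 𝕜 fun x => ?_⟩
  rw [adjoint_inner_left, InnerProductSpace.toDual_symm_apply]
  simpa [hg] using hΦ ⟨T x, x, rfl⟩

theorem mem_range_of_adjoint_apply_eq {A : E →L[𝕜] F} {b : F}
    (hb : b ∈ (LinearMap.range (A : E →ₗ[𝕜] F)).topologicalClosure) {v : E}
    (hv : adjoint A (A v) = adjoint A b) : b ∈ LinearMap.range (A : E →ₗ[𝕜] F) := by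
  set K := LinearMap.range (A : E →ₗ[𝕜] F)
  have hperp : b - A v ∈ Kᗮ := by
    rw [show Kᗮ = A.rangeᗮ from rfl, orthogonal_range]
    simp [hv]
  have hclos : b - A v ∈ Kᗮᗮ := by
    rw [K.orthogonal_orthogonal_eq_closure]
    exact sub_mem hb (K.le_topologicalClosure ⟨v, rfl⟩)
  have : b - A v = 0 := by
    simpa using (Kᗮ.inf_orthogonal_eq_bot).le ⟨hperp, hclos⟩
  exact ⟨v, (sub_eq_zero.mp this).symm⟩

end RangeCriterion

theorem norm_le_of_tendsto_inner_of_frequently {ι 𝕜 E : Type*} [RCLike 𝕜]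
    [NormedAddCommGroup E] [InnerProductSpace 𝕜 E] {l : Filter ι} {x w : ι → E} {w₀ : E} {a : 𝕜}
    {C : ℝ} (hw : Tendsto w l (𝓝 w₀)) (ha : Tendsto (fun i => inner 𝕜 (x i) (w i)) l (𝓝 a))
    (hx : ∃ᶠ i in l, ‖x i‖ ≤ C) : ‖a‖ ≤ C * ‖w₀‖ :=
  le_of_tendsto_of_tendsto_of_frequently ha.norm (hw.norm.const_mul C) <| hx.mono fun _ hi =>
    (norm_inner_le_norm _ _).trans (mul_le_mul_of_nonneg_right hi (norm_nonneg _))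

theorem stmt3_general {X Y : Type*} [NormedAddCommGroup X] [InnerProductSpace ℂ X] [CompleteSpace X]
    [NormedAddCommGroup Y] [InnerProductSpace ℂ Y] [CompleteSpace Y]
    (A : X →L[ℂ] Y) (Xn : ℕ → Submodule ℂ X) (Yn : ℕ → Submodule ℂ Y)
    (P : ℕ → X →L[ℂ] X) (Q : ℕ → Y →L[ℂ] Y)
    (hP : ∀ n, IsOrthProj (P n) (Xn n)) (hQ : ∀ n, IsOrthProj (Q n) (Yn n))
    (hPconv : ∀ x : X, Filter.Tendsto (fun n => P n x) atTop (nhds x))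
    (hQconv : ∀ y : Y, Filter.Tendsto (fun n => Q n y) atTop (nhds y))
    (An : ℕ → X →L[ℂ] Y) (hAn : ∀ n, An n = Q n ∘L A ∘L P n)
    (B : ℕ → Y →L[ℂ] X) (hB : ∀ n, IsMPInv (An n) (B n))
    (b : Y) (hb1 : b ∈ (LinearMap.range (A : X →ₗ[ℂ] Y)).topologicalClosure) (hb2 : b ∉ LinearMap.range (A : X →ₗ[ℂ] Y)) :
    Filter.Tendsto (fun n => ‖B n (Q n b)‖) atTop atTop := by
  have hPn n : ‖P n‖ ≤ 1 := (hP n).norm_le_one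
  have hQn n : ‖Q n‖ ≤ 1 := (hQ n).norm_le_one
  have hAn_tendsto u : Tendsto (fun n => An n u) atTop (𝓝 (A u)) := by
    simp only [hAn, comp_apply]
    exact tendsto_apply_of_norm_le hQn (hQconv _) ((A.continuous.tendsto u).comp (hPconv u))
  have hAn_adjoint n y : adjoint (An n) y = P n (adjoint A (Q n y)) := by
    rw [hAn, adjoint_comp, adjoint_comp, (hP n).2.1, (hQ n).2.1]; rfl
  have hAnAn_tendsto u :
      Tendsto (fun n => adjoint (An n) (An n u)) atTop (𝓝 (adjoint A (A u))) := by
    simp only [hAn_adjoint]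
    exact tendsto_apply_of_norm_le hPn (hPconv _) <| ((adjoint A).continuous.tendsto _).comp <|
      tendsto_apply_of_norm_le hQn (hQconv _) (hAn_tendsto u)
  by_contra hcon
  obtain ⟨C, hC⟩ : ∃ C, ∃ᶠ n in atTop, ‖B n (Q n b)‖ ≤ C := by
    simp only [tendsto_atTop, not_forall, Filter.not_eventually, not_le] at hcon
    obtain ⟨C, hC⟩ := hcon
    exact ⟨C, hC.mono fun _ => le_of_lt⟩
  have hbound u : ‖inner ℂ (adjoint A b) u‖ ≤ C * ‖(adjoint A ∘L A) u‖ := by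
    rw [adjoint_inner_left]
    refine norm_le_of_tendsto_inner_of_frequently (hAnAn_tendsto u) ?_ hC
    simp only [(hB _).inner_apply_adjoint_apply]
    exact (hQconv b).inner (hAn_tendsto u)
  obtain ⟨v, hv⟩ := exists_adjoint_apply_eq_of_norm_inner_le _ _ C hbound
  rw [A.isPositive_adjoint_comp_self.isSelfAdjoint.adjoint_eq] at hv
  exact hb2 (mem_range_of_adjoint_apply_eq hb1 hv)

/-- Theorem 1.1 (a): in the Petrov–Galerkin setting, if
`b ∉ R(A) ⊕ R(A)^⊥ = D(A†)` then `‖Aₙ† Qₙ Q_{cl R(A)} b‖ → ∞`. -/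
theorem stmt3 {X Y : Type*} [NormedAddCommGroup X] [InnerProductSpace ℂ X] [CompleteSpace X]
    [NormedAddCommGroup Y] [InnerProductSpace ℂ Y] [CompleteSpace Y]
    (hX : ¬ FiniteDimensional ℂ X) (hY : ¬ FiniteDimensional ℂ Y)
    (A : X →L[ℂ] Y) (Xn : ℕ → Submodule ℂ X) (Yn : ℕ → Submodule ℂ Y)
    (hXn : ∀ n, IsClosed (Xn n : Set X)) (hYn : ∀ n, IsClosed (Yn n : Set Y))
    (P : ℕ → X →L[ℂ] X) (Q : ℕ → Y →L[ℂ] Y)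
    (hP : ∀ n, IsOrthProj (P n) (Xn n)) (hQ : ∀ n, IsOrthProj (Q n) (Yn n))
    (hPconv : ∀ x : X, Filter.Tendsto (fun n => P n x) atTop (nhds x))
    (hQconv : ∀ y : Y, Filter.Tendsto (fun n => Q n y) atTop (nhds y))
    (An : ℕ → X →L[ℂ] Y) (hAn : ∀ n, An n = Q n ∘L A ∘L P n)
    (hRanAn : ∀ n, IsClosed (LinearMap.range (An n : X →ₗ[ℂ] Y) : Set Y))
    (B : ℕ → Y →L[ℂ] X) (hB : ∀ n, IsMPInv (An n) (B n))
    (b : Y) (hb1 : b ∈ (LinearMap.range (A : X →ₗ[ℂ] Y)).topologicalClosure) (hb2 : b ∉ LinearMap.range (A : X →ₗ[ℂ] Y)) :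
    Filter.Tendsto (fun n => ‖B n (Q n b)‖) atTop atTop :=
  stmt3_general A Xn Yn P Q hP hQ hPconv hQconv An hAn B hB b hb1 hb2
end
end

section
/- Let X, Y be Hilbert spaces, A : X → Y a compact linear operator with singular system (σₙ; vₙ, uₙ), where σₙ > 0 are the singular values and {uₙ} is an orthonormal basis of the closure of R(A). Then y ∈ R(A) ⊕ R(A)^⊥ if and only if Σₙ |⟨y, uₙ⟩|² / σₙ² < ∞ (Picard's criterion). -/
noncomputable section
open Filter Topology Submodule
open scoped InnerProductSpace

/-- `(σ; v, u)` is a singular system of the compact operator `A`: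
the `σ n` are positive and tend to `0`, `v` is an orthonormal basis of `N(A)ᗮ = cl R(A*)`,
`u` is an orthonormal basis of `cl R(A)`, and `A x = Σₙ σₙ ⟨x, vₙ⟩ uₙ`. -/
structure IsSingularSystem {X Y : Type*}
    [NormedAddCommGroup X] [InnerProductSpace ℂ X] [CompleteSpace X]
    [NormedAddCommGroup Y] [InnerProductSpace ℂ Y] [CompleteSpace Y]
    (A : X →L[ℂ] Y) (σ : ℕ → ℝ) (v : ℕ → X) (u : ℕ → Y) : Prop where
  compact : IsCompactOperator A
  pos : ∀ n, 0 < σ n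
  tendsto_zero : Tendsto σ atTop (nhds 0)
  orthonormal_v : Orthonormal ℂ v
  orthonormal_u : Orthonormal ℂ u
  dense_v : (span ℂ (Set.range v)).topologicalClosure = (LinearMap.ker (A : X →ₗ[ℂ] Y))ᗮ
  dense_u : (span ℂ (Set.range u)).topologicalClosure = (LinearMap.range (A : X →ₗ[ℂ] Y)).topologicalClosure
  svd : ∀ x : X, A x = ∑' n, ((σ n : ℂ) * ⟪v n, x⟫_ℂ) • u n

/-! The coefficients of `A x` in the basis `u` are `⟪u n, A x⟫ = σ n * ⟪v n, x⟫`, and `R(A)ᗮ` consists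
exactly of the vectors orthogonal to every `u n`. Hence for `y = A x + b` with `b ⊥ R(A)` the Picard
series is Bessel's series of `x` in the orthonormal family `v`. Conversely, if the Picard series
converges then `x = Σₙ (⟪u n, y⟫ / σ n) • v n` has square-summable coefficients, and `y - A x` is
orthogonal to every `u n`. -/

section Orthonormal

variable {𝕜 E ι : Type*} [RCLike 𝕜] [NormedAddCommGroup E] [InnerProductSpace 𝕜 E] {u : ι → E}

lemma Orthonormal.inner_tsum_smul [CompleteSpace E] (hu : Orthonormal 𝕜 u) {c : ι → 𝕜}
    (hc : Summable fun i => ‖c i‖ ^ 2) (j : ι) :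
    ⟪u j, ∑' i, c i • u i⟫_𝕜 = c j := by
  have hsum : Summable fun i => c i • u i := by
    simpa [LinearIsometry.toSpanSingleton_apply] using
      (hu.orthogonalFamily.summable_iff_norm_sq_summable c).mpr hc
  change innerSL 𝕜 (u j) _ = _
  rw [(innerSL 𝕜 (u j)).map_tsum hsum, tsum_eq_single j fun i hij => ?_]
  · simp [inner_self_eq_norm_sq_to_K, hu.1 j]
  · simp [hu.inner_eq_zero (Ne.symm hij)]

lemma mem_orthogonal_iff_forall_inner_eq_zero {K : Submodule 𝕜 E}
    (hK : (span 𝕜 (Set.range u)).topologicalClosure = K.topologicalClosure) {y : E} :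
    y ∈ Kᗮ ↔ ∀ i, ⟪u i, y⟫_𝕜 = 0 := by
  rw [← orthogonal_closure, ← hK, orthogonal_closure, mem_orthogonal]
  refine ⟨fun h i => h _ (subset_span ⟨i, rfl⟩), fun h w hw => ?_⟩
  induction hw using span_induction with
  | mem _ hw => obtain ⟨i, rfl⟩ := hw; exact h i
  | zero => exact inner_zero_left y
  | add _ _ _ _ h₁ h₂ => rw [inner_add_left, h₁, h₂, add_zero]
  | smul _ _ _ h => rw [inner_smul_left, h, mul_zero]

end Orthonormal

namespace IsSingularSystem

variable {X Y : Type*} [NormedAddCommGroup X] [InnerProductSpace ℂ X] [CompleteSpace X]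
    [NormedAddCommGroup Y] [InnerProductSpace ℂ Y] [CompleteSpace Y]
    {A : X →L[ℂ] Y} {σ : ℕ → ℝ} {v : ℕ → X} {u : ℕ → Y}

lemma summable_norm_sq_mul (hsys : IsSingularSystem A σ v u) {c : ℕ → ℂ}
    (hc : Summable fun n => ‖c n‖ ^ 2) :
    Summable fun n => ‖(σ n : ℂ) * c n‖ ^ 2 := by
  obtain ⟨C, hC⟩ := hsys.tendsto_zero.bddAbove_range
  refine (hc.mul_left (C ^ 2)).of_nonneg_of_le (fun n => by positivity) fun n => ?_
  have hσ := hsys.pos n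
  have hσC : σ n ≤ C := hC ⟨n, rfl⟩
  rw [norm_mul, mul_pow, Complex.norm_real, Real.norm_of_nonneg hσ.le]
  gcongr

lemma inner_apply (hsys : IsSingularSystem A σ v u) (x : X) (n : ℕ) :
    ⟪u n, A x⟫_ℂ = σ n * ⟪v n, x⟫_ℂ := by
  rw [hsys.svd x, hsys.orthonormal_u.inner_tsum_smul
    (hsys.summable_norm_sq_mul (hsys.orthonormal_v.inner_products_summable x))]

lemma mem_orthogonal_range_iff (hsys : IsSingularSystem A σ v u) {y : Y} :
    y ∈ (LinearMap.range (A : X →ₗ[ℂ] Y))ᗮ ↔ ∀ n, ⟪u n, y⟫_ℂ = 0 :=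
  mem_orthogonal_iff_forall_inner_eq_zero hsys.dense_u

end IsSingularSystem

theorem stmt6 {X Y : Type*} [NormedAddCommGroup X] [InnerProductSpace ℂ X] [CompleteSpace X]
    [NormedAddCommGroup Y] [InnerProductSpace ℂ Y] [CompleteSpace Y]
    (A : X →L[ℂ] Y) (σ : ℕ → ℝ) (v : ℕ → X) (u : ℕ → Y)
    (hsys : IsSingularSystem A σ v u) (y : Y) :
    y ∈ LinearMap.range (A : X →ₗ[ℂ] Y) ⊔ (LinearMap.range (A : X →ₗ[ℂ] Y))ᗮ ↔
      Summable (fun n => ‖⟪u n, y⟫_ℂ‖ ^ 2 / σ n ^ 2) := by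
  have hσ n : (σ n : ℂ) ≠ 0 := Complex.ofReal_ne_zero.mpr (hsys.pos n).ne'
  have hcoeff : (fun n => ‖⟪u n, y⟫_ℂ‖ ^ 2 / σ n ^ 2) = fun n => ‖⟪u n, y⟫_ℂ / σ n‖ ^ 2 := by
    ext n
    rw [norm_div, div_pow, Complex.norm_real, Real.norm_of_nonneg (hsys.pos n).le]
  rw [hcoeff]
  constructor
  · intro hy
    obtain ⟨_, ⟨x, rfl⟩, b, hb, rfl⟩ := mem_sup.mp hy
    have hb' := hsys.mem_orthogonal_range_iff.mp hb
    convert hsys.orthonormal_v.inner_products_summable x using 3 with n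
    rw [inner_add_right, hb', add_zero, ContinuousLinearMap.coe_coe, hsys.inner_apply,
      mul_div_cancel_left₀ _ (hσ n)]
  · intro hsum
    set x : X := ∑' n, (⟪u n, y⟫_ℂ / σ n) • v n
    have hAx n : ⟪u n, A x⟫_ℂ = ⟪u n, y⟫_ℂ := by
      rw [hsys.inner_apply, hsys.orthonormal_v.inner_tsum_smul hsum, mul_div_cancel₀ _ (hσ n)]
    refine mem_sup.mpr ⟨A x, LinearMap.mem_range_self _ x, y - A x, ?_, add_sub_cancel _ _⟩
    exact hsys.mem_orthogonal_range_iff.mpr fun n => by rw [inner_sub_right, hAx, sub_self]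
end
end

section
/- Let A be a compact linear operator between infinite-dimensional Hilbert spaces with singular system (σₙ; vₙ, uₙ), and consider a Petrov–Galerkin discretization Aₙ := Qₙ A Pₙ from finite-dimensional subspaces Xₙ = span{ξ₁,…,ξₙ} to Yₙ = span{η₁,…,ηₙ}, where {ξₖ}, {ηₖ} are arbitrary bases of X, Y. If b ∈ Y satisfies Σₖ |⟨b, uₖ⟩|² / σₖ² = ∞, then ‖Aₙ† Qₙ Q b‖ → ∞, where Q is the orthogonal projection onto cl(R(A)). -/
noncomputable section
open ContinuousLinearMap Submodule Filter Topology MeasureTheory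
open scoped InnerProductSpace

/-! If `xₙ = Aₙ† Qₙ Q b` stayed bounded along a subsequence, its coefficients `⟪vₖ, xₙ⟫` would
converge there to `⟪uₖ, b⟫ / σₖ`: since `Aₙ* Aₙ vₖ → σₖ² vₖ`, and the Moore–Penrose identity
`Aₙ* Aₙ Aₙ† = Aₙ*` gives `⟪Aₙ* Aₙ vₖ, xₙ⟫ = ⟪Aₙ vₖ, Qₙ Q b⟫ → σₖ ⟪uₖ, b⟫`. Bessel's inequality
would then bound `Σₖ |⟪uₖ, b⟫|² / σₖ²` by the square of the bound, contradicting the Picard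
condition. -/

section

variable {𝕜 E F ι : Type*} {l : Filter ι}

theorem tendsto_apply_of_norm_le_one [NontriviallyNormedField 𝕜] [SeminormedAddCommGroup E]
    [SeminormedAddCommGroup F] [NormedSpace 𝕜 E] [NormedSpace 𝕜 F] {T : ι → E →L[𝕜] F}
    (hT : ∀ i, ‖T i‖ ≤ 1) {c : ι → E} {a : E} {b : F} (hc : Tendsto c l (𝓝 a))
    (ha : Tendsto (fun i => T i a) l (𝓝 b)) : Tendsto (fun i => T i (c i)) l (𝓝 b) := by
  have hsmall : Tendsto (fun i => T i (c i - a)) l (𝓝 0) :=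
    squeeze_zero_norm (fun i => (T i).le_of_opNorm_le (hT i) _ |>.trans_eq (one_mul _))
      (tendsto_iff_norm_sub_tendsto_zero.1 hc)
  simpa using hsmall.add ha

variable [RCLike 𝕜] [SeminormedAddCommGroup E] [InnerProductSpace 𝕜 E]

theorem tendsto_inner_of_tendsto_of_norm_le {g : ι → E} {g₀ : E} (hg : Tendsto g l (𝓝 g₀))
    {x : ι → E} {C : ℝ} (hx : ∀ᶠ i in l, ‖x i‖ ≤ C) {L : 𝕜}
    (hL : Tendsto (fun i => ⟪g i, x i⟫_𝕜) l (𝓝 L)) : Tendsto (fun i => ⟪g₀, x i⟫_𝕜) l (𝓝 L) := by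
  have hsmall : Tendsto (fun i => ⟪g i - g₀, x i⟫_𝕜) l (𝓝 0) := by
    refine squeeze_zero_norm' ?_
      (by simpa using (tendsto_iff_norm_sub_tendsto_zero.1 hg).mul_const C)
    filter_upwards [hx] with i hi
    exact (norm_inner_le_norm _ _).trans (mul_le_mul_of_nonneg_left hi (norm_nonneg _))
  simpa [inner_sub_left] using hL.sub hsmall

theorem summable_norm_sq_of_tendsto_inner [l.NeBot] {κ : Type*} {v : κ → E}
    (hv : Orthonormal 𝕜 v) {x : ι → E} {C : ℝ} (hx : ∀ᶠ i in l, ‖x i‖ ≤ C) {c : κ → 𝕜}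
    (hc : ∀ k, Tendsto (fun i => ⟪v k, x i⟫_𝕜) l (𝓝 (c k))) :
    Summable fun k => ‖c k‖ ^ 2 := by
  refine summable_of_sum_le (c := C ^ 2) (fun k => sq_nonneg _) fun s => ?_
  refine le_of_tendsto (tendsto_finsetSum s fun k _ => ((hc k).norm.pow 2)) ?_
  filter_upwards [hx] with i hi
  exact (hv.sum_inner_products_le (x i)).trans (pow_le_pow_left₀ (norm_nonneg _) hi 2)

end

theorem IsOrthProj.isStarProjection {E : Type*} [NormedAddCommGroup E] [InnerProductSpace ℂ E]
    [CompleteSpace E] {P : E →L[ℂ] E} {K : Submodule ℂ E} (h : IsOrthProj P K) :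
    IsStarProjection P :=
  ⟨h.1, h.2.1⟩

theorem IsMPInv.inner_adjoint_apply_apply {E F : Type*} [NormedAddCommGroup E]
    [InnerProductSpace ℂ E] [CompleteSpace E] [NormedAddCommGroup F] [InnerProductSpace ℂ F]
    [CompleteSpace F] {T : E →L[ℂ] F} {B : F →L[ℂ] E} (h : IsMPInv T B) (z : E) (w : F) :
    ⟪adjoint T (T z), B w⟫_ℂ = ⟪T z, w⟫_ℂ := by
  calc ⟪adjoint T (T z), B w⟫_ℂ = ⟪T z, (T ∘L B) w⟫_ℂ := adjoint_inner_left _ _ _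
    _ = ⟪(T ∘L B) (T z), w⟫_ℂ := by rw [← adjoint_inner_left, h.2.2.1]
    _ = ⟪T z, w⟫_ℂ := by rw [← comp_apply, comp_assoc, h.1]

theorem inner_projCl_of_mem {E : Type*} [NormedAddCommGroup E] [InnerProductSpace ℂ E]
    [CompleteSpace E] {K : Submodule ℂ E} {w : E} (hw : w ∈ K.topologicalClosure) (b : E) :
    ⟪w, projCl K b⟫_ℂ = ⟪w, b⟫_ℂ :=
  haveI : CompleteSpace K.topologicalClosure := K.isClosed_topologicalClosure.completeSpace_coe
  inner_orthogonalProjectionOnto_eq_of_mem_left (⟨w, hw⟩ : K.topologicalClosure) b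

namespace IsSingularSystem

variable {X Y : Type*} [NormedAddCommGroup X] [InnerProductSpace ℂ X] [CompleteSpace X]
  [NormedAddCommGroup Y] [InnerProductSpace ℂ Y] [CompleteSpace Y]
  {A : X →L[ℂ] Y} {σ : ℕ → ℝ} {v : ℕ → X} {u : ℕ → Y}

theorem apply_v (hsys : IsSingularSystem A σ v u) (k : ℕ) : A (v k) = (σ k : ℂ) • u k := by
  have hv := orthonormal_iff_ite.mp hsys.orthonormal_v
  rw [hsys.svd (v k), tsum_eq_single k fun n hn => by simp [hv n k, hn]]
  simp [hsys.orthonormal_v.1 k]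

theorem hasSum_apply (hsys : IsSingularSystem A σ v u) (x : X) :
    HasSum (fun n => ((σ n : ℂ) * ⟪v n, x⟫_ℂ) • u n) (A x) := by
  obtain ⟨M, hM⟩ := hsys.tendsto_zero.norm.bddAbove_range
  have hcoef : Summable fun n => ‖(σ n : ℂ) * ⟪v n, x⟫_ℂ‖ ^ 2 := by
    refine .of_nonneg_of_le (fun n => sq_nonneg _) (fun n => ?_)
      ((hsys.orthonormal_v.inner_products_summable x).mul_left (M ^ 2))
    rw [norm_mul, Complex.norm_real, mul_pow]
    gcongr
    exact hM ⟨n, rfl⟩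
  rw [hsys.svd x]
  exact ((hsys.orthonormal_u.orthogonalFamily.summable_iff_norm_sq_summable _).2 hcoef).hasSum

theorem inner_u_apply (hsys : IsSingularSystem A σ v u) (k : ℕ) (x : X) :
    ⟪u k, A x⟫_ℂ = σ k * ⟪v k, x⟫_ℂ := by
  have hu := orthonormal_iff_ite.mp hsys.orthonormal_u
  have h := (innerSL ℂ (u k)).hasSum (hsys.hasSum_apply x)
  simp only [innerSL_apply_apply] at h
  rw [← h.tsum_eq, tsum_eq_single k fun n hn => by simp [inner_smul_right, hu k n, Ne.symm hn]]
  simp [inner_smul_right, hsys.orthonormal_u.1 k]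

theorem adjoint_apply_u (hsys : IsSingularSystem A σ v u) (k : ℕ) :
    adjoint A (u k) = (σ k : ℂ) • v k :=
  ext_inner_right ℂ fun x => by
    rw [adjoint_inner_left, hsys.inner_u_apply, inner_smul_left, Complex.conj_ofReal]

theorem u_mem_closure_range (hsys : IsSingularSystem A σ v u) (k : ℕ) :
    u k ∈ (LinearMap.range (A : X →ₗ[ℂ] Y)).topologicalClosure :=
  hsys.dense_u ▸ le_topologicalClosure _ (subset_span (Set.mem_range_self k))

theorem tendsto_inner_v_mpInv_galerkin (hsys : IsSingularSystem A σ v u)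
    {P : ℕ → X →L[ℂ] X} {Q : ℕ → Y →L[ℂ] Y} (hP : ∀ n, IsStarProjection (P n))
    (hQ : ∀ n, IsStarProjection (Q n)) (hPconv : ∀ x, Tendsto (fun n => P n x) atTop (𝓝 x))
    (hQconv : ∀ y, Tendsto (fun n => Q n y) atTop (𝓝 y)) {B : ℕ → Y →L[ℂ] X}
    (hB : ∀ n, IsMPInv (Q n ∘L A ∘L P n) (B n)) {y : Y} {l : Filter ℕ} (hl : l ≤ atTop) {C : ℝ}
    (hbound : ∀ᶠ n in l, ‖B n (Q n y)‖ ≤ C) (k : ℕ) :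
    Tendsto (fun n => ⟪v k, B n (Q n y)⟫_ℂ) l (𝓝 (⟪u k, y⟫_ℂ / σ k)) := by
  have hPle n := (hP n).norm_le
  have hQle n := (hQ n).norm_le
  set e : ℕ → Y := fun n => (Q n ∘L A ∘L P n) (v k)
  have he : Tendsto e atTop (𝓝 ((σ k : ℂ) • u k)) := by
    rw [← hsys.apply_v k]
    exact tendsto_apply_of_norm_le_one hQle ((A.continuous.tendsto _).comp (hPconv _)) (hQconv _)
  have hadj : Tendsto (fun n => adjoint (Q n ∘L A ∘L P n) (e n)) atTop
      (𝓝 (((σ k : ℂ) * σ k) • v k)) := by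
    have hQe := tendsto_apply_of_norm_le_one hQle he (hQconv _)
    have hAQe := ((adjoint A).continuous.tendsto _).comp hQe
    rw [Function.comp_def, map_smul, hsys.adjoint_apply_u, smul_smul] at hAQe
    refine (tendsto_apply_of_norm_le_one hPle hAQe (hPconv _)).congr fun n => ?_
    simp only [adjoint_comp, (hP n).isSelfAdjoint.adjoint_eq, (hQ n).isSelfAdjoint.adjoint_eq]
    rfl
  have hpair : Tendsto (fun n => ⟪adjoint (Q n ∘L A ∘L P n) (e n), B n (Q n y)⟫_ℂ) atTop
      (𝓝 (σ k * ⟪u k, y⟫_ℂ)) := by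
    have h := he.inner (𝕜 := ℂ) (hQconv y)
    rw [inner_smul_left, Complex.conj_ofReal] at h
    exact h.congr fun n => ((hB n).inner_adjoint_apply_apply _ _).symm
  have hσ : (σ k : ℂ) ≠ 0 := by exact_mod_cast (hsys.pos k).ne'
  have hlim := (tendsto_inner_of_tendsto_of_norm_le (hadj.mono_left hl) hbound
    (hpair.mono_left hl)).const_mul ((σ k : ℂ) * σ k)⁻¹
  convert hlim using 2 with n
  · rw [inner_smul_left, map_mul, Complex.conj_ofReal]
    field_simp
  · field_simp

end IsSingularSystem

theorem stmt8_general {X Y : Type*} [NormedAddCommGroup X] [InnerProductSpace ℂ X] [CompleteSpace X]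
    [NormedAddCommGroup Y] [InnerProductSpace ℂ Y] [CompleteSpace Y]
    (A : X →L[ℂ] Y) (σ : ℕ → ℝ) (v : ℕ → X) (u : ℕ → Y)
    (hsys : IsSingularSystem A σ v u)
    (ξ : ℕ → X) (η : ℕ → Y)
    (P : ℕ → X →L[ℂ] X) (Q : ℕ → Y →L[ℂ] Y)
    (hP : ∀ n, IsOrthProj (P n) (span ℂ (ξ '' Set.Iio n)))
    (hQ : ∀ n, IsOrthProj (Q n) (span ℂ (η '' Set.Iio n)))
    (hPconv : ∀ x : X, Filter.Tendsto (fun n => P n x) atTop (nhds x))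
    (hQconv : ∀ y : Y, Filter.Tendsto (fun n => Q n y) atTop (nhds y))
    (An : ℕ → X →L[ℂ] Y) (hAn : ∀ n, An n = Q n ∘L A ∘L P n)
    (B : ℕ → Y →L[ℂ] X) (hB : ∀ n, IsMPInv (An n) (B n))
    (b : Y) (hb : ¬ Summable (fun k => ‖⟪u k, b⟫_ℂ‖ ^ 2 / σ k ^ 2)) :
    Filter.Tendsto (fun n => ‖B n (Q n (projCl (LinearMap.range (A : X →ₗ[ℂ] Y)) b))‖) atTop atTop := by
  set x : ℕ → X := fun n => B n (Q n (projCl (LinearMap.range (A : X →ₗ[ℂ] Y)) b))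
  by_contra hx
  obtain ⟨C, hC⟩ : ∃ C, ∃ᶠ n in atTop, ‖x n‖ < C := by
    simpa [tendsto_atTop, frequently_atTop] using hx
  -- `atTop ⊓ 𝓟 {n | ‖x n‖ < C}` plays the role of a bounded subsequence
  have := frequently_iff_neBot.1 hC
  have hbound : ∀ᶠ n in atTop ⊓ 𝓟 {n | ‖x n‖ < C}, ‖x n‖ ≤ C :=
    eventually_inf_principal.2 (.of_forall fun _ hn => le_of_lt hn)
  have hcoef k : Tendsto (fun n => ⟪v k, x n⟫_ℂ) (atTop ⊓ 𝓟 {n | ‖x n‖ < C})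
      (𝓝 (⟪u k, b⟫_ℂ / σ k)) := by
    rw [← inner_projCl_of_mem (hsys.u_mem_closure_range k)]
    exact hsys.tendsto_inner_v_mpInv_galerkin (fun n => (hP n).isStarProjection)
      (fun n => (hQ n).isStarProjection) hPconv hQconv (fun n => hAn n ▸ hB n) inf_le_left hbound k
  refine hb ((summable_norm_sq_of_tendsto_inner hsys.orthonormal_v hbound hcoef).congr fun k => ?_)
  rw [norm_div, div_pow, Complex.norm_real, Real.norm_eq_abs, sq_abs]

/-- Theorem 4.1 (1): for a compact operator with singular system `(σ; v, u)`
and a Petrov–Galerkin discretization from spans of the first `n` elements of arbitrary bases,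
if `Σₖ |⟨b,uₖ⟩|²/σₖ² = ∞` then `‖Aₙ† Qₙ Q_{cl R(A)} b‖ → ∞`. -/
theorem stmt8 {X Y : Type*} [NormedAddCommGroup X] [InnerProductSpace ℂ X] [CompleteSpace X]
    [NormedAddCommGroup Y] [InnerProductSpace ℂ Y] [CompleteSpace Y]
    (hX : ¬ FiniteDimensional ℂ X) (hY : ¬ FiniteDimensional ℂ Y)
    (A : X →L[ℂ] Y) (σ : ℕ → ℝ) (v : ℕ → X) (u : ℕ → Y)
    (hsys : IsSingularSystem A σ v u)
    (ξ : ℕ → X) (η : ℕ → Y)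
    (P : ℕ → X →L[ℂ] X) (Q : ℕ → Y →L[ℂ] Y)
    (hP : ∀ n, IsOrthProj (P n) (span ℂ (ξ '' Set.Iio n)))
    (hQ : ∀ n, IsOrthProj (Q n) (span ℂ (η '' Set.Iio n)))
    (hPconv : ∀ x : X, Filter.Tendsto (fun n => P n x) atTop (nhds x))
    (hQconv : ∀ y : Y, Filter.Tendsto (fun n => Q n y) atTop (nhds y))
    (An : ℕ → X →L[ℂ] Y) (hAn : ∀ n, An n = Q n ∘L A ∘L P n)
    (B : ℕ → Y →L[ℂ] X) (hB : ∀ n, IsMPInv (An n) (B n))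
    (b : Y) (hb : ¬ Summable (fun k => ‖⟪u k, b⟫_ℂ‖ ^ 2 / σ k ^ 2)) :
    Filter.Tendsto (fun n => ‖B n (Q n (projCl (LinearMap.range (A : X →ₗ[ℂ] Y)) b))‖) atTop atTop :=
  stmt8_general A σ v u hsys ξ η P Q hP hQ hPconv hQconv An hAn B hB b hb
end
end

section
/- Let A be a compact linear operator between infinite-dimensional Hilbert spaces whose left singular vectors {uₙ} form a complete orthonormal system of Y (equivalently, A has dense range). In the Petrov–Galerkin setting with arbitrary bases, if b ∈ Y satisfies Σₖ |⟨b, uₖ⟩|² / σₖ² = ∞, then ‖Aₙ† Qₙ b‖ → ∞ as n → ∞. -/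
noncomputable section
open ContinuousLinearMap Submodule Filter Topology MeasureTheory
open scoped InnerProductSpace

section MyAux
variable {E F : Type*} [NormedAddCommGroup E] [InnerProductSpace ℂ E] [CompleteSpace E]
  [NormedAddCommGroup F] [InnerProductSpace ℂ F] [CompleteSpace F]

lemma my_proj_norm_le (P : E →L[ℂ] E) (h1 : P ∘L P = P)
    (h2 : ContinuousLinearMap.adjoint P = P) (x : E) : ‖P x‖ ≤ ‖x‖ := by
  rcases eq_or_ne (‖P x‖) 0 with h | h
  · rw [h]; positivity
  have hip : ⟪P x, P x⟫_ℂ = ⟪P x, x⟫_ℂ := by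
    calc ⟪P x, P x⟫_ℂ = ⟪ContinuousLinearMap.adjoint P (P x), x⟫_ℂ := by
          rw [ContinuousLinearMap.adjoint_inner_left]
      _ = ⟪(P ∘L P) x, x⟫_ℂ := by rw [h2, ContinuousLinearMap.comp_apply]
      _ = ⟪P x, x⟫_ℂ := by rw [h1]
  have h3 : (‖P x‖ : ℝ) ^ 2 = Complex.re ⟪P x, x⟫_ℂ := by
    rw [← hip]
    exact (inner_self_eq_norm_sq (𝕜 := ℂ) (P x)).symm
  have h4 : Complex.re ⟪P x, x⟫_ℂ ≤ ‖P x‖ * ‖x‖ := by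
    calc Complex.re ⟪P x, x⟫_ℂ ≤ ‖⟪P x, x⟫_ℂ‖ := Complex.re_le_norm _
      _ ≤ ‖P x‖ * ‖x‖ := norm_inner_le_norm _ _
  have hpos : 0 < ‖P x‖ := lt_of_le_of_ne (norm_nonneg _) (Ne.symm h)
  nlinarith

lemma my_proj_best (R : F →L[ℂ] F) (h1 : R ∘L R = R)
    (h2 : ContinuousLinearMap.adjoint R = R) (w m : F) (hm : R m = m) :
    ‖w - R w‖ ≤ ‖w - m‖ := by
  have horth : ⟪w - R w, R w - m⟫_ℂ = 0 := by
    have hRm : R w - m = R (w - m) := by rw [map_sub, hm]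
    rw [hRm, ← ContinuousLinearMap.adjoint_inner_left, h2, map_sub,
      ← ContinuousLinearMap.comp_apply R R, h1, sub_self, inner_zero_left]
  have hsum : w - m = (w - R w) + (R w - m) := by abel
  have hsq : ‖w - m‖ ^ 2 = ‖w - R w‖ ^ 2 + ‖R w - m‖ ^ 2 := by
    rw [hsum, @norm_add_sq ℂ, horth]
    simp
  nlinarith [norm_nonneg (w - R w), norm_nonneg (w - m), norm_nonneg (R w - m)]

end MyAux

lemma my_coeff {X Y : Type*} [NormedAddCommGroup X] [InnerProductSpace ℂ X] [CompleteSpace X]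
    [NormedAddCommGroup Y] [InnerProductSpace ℂ Y] [CompleteSpace Y]
    {A : X →L[ℂ] Y} {σ : ℕ → ℝ} {v : ℕ → X} {u : ℕ → Y}
    (hsys : IsSingularSystem A σ v u) (x : X) (k : ℕ) :
    ⟪u k, A x⟫_ℂ = (σ k : ℂ) * ⟪v k, x⟫_ℂ := by
  classical
  set c : ℕ → ℂ := fun n => (σ n : ℂ) * ⟪v n, x⟫_ℂ with hc
  have hsq : Summable (fun n => ‖c n‖ ^ 2) := by
    obtain ⟨M, hM⟩ := hsys.tendsto_zero.abs.bddAbove_range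
    simp only [upperBounds, Set.mem_range, Set.mem_setOf_eq] at hM
    refine Summable.of_nonneg_of_le (fun n => by positivity) (fun n => ?_)
      ((hsys.orthonormal_v.inner_products_summable x).mul_left (M ^ 2))
    have h1 : ‖c n‖ = |σ n| * ‖⟪v n, x⟫_ℂ‖ := by
      simp [hc, Complex.norm_real]
    have h2 : |σ n| ≤ M := hM ⟨n, rfl⟩
    rw [h1, mul_pow]
    have : |σ n| ^ 2 ≤ M ^ 2 := by nlinarith [abs_nonneg (σ n)]
    have hnn : (0:ℝ) ≤ ‖⟪v n, x⟫_ℂ‖ ^ 2 := by positivity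
    nlinarith
  have hsummable : Summable (fun n => c n • u n) := by
    have hiff := hsys.orthonormal_u.orthogonalFamily.summable_iff_norm_sq_summable c
    simp only [LinearIsometry.toSpanSingleton_apply] at hiff
    exact hiff.mpr hsq
  have hAx : A x = ∑' n, c n • u n := hsys.svd x
  have hmap := ContinuousLinearMap.map_tsum (innerSL ℂ (u k)) hsummable
  simp only [innerSL_apply_apply] at hmap
  rw [hAx, hmap]
  have hterm : ∀ n, ⟪u k, c n • u n⟫_ℂ = if n = k then c k else 0 := by
    intro n
    rw [inner_smul_right]
    rcases eq_or_ne n k with rfl | hne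
    · have h1 : ⟪u n, u n⟫_ℂ = ((‖u n‖ : ℂ)) ^ 2 := inner_self_eq_norm_sq_to_K (u n)
      rw [h1, hsys.orthonormal_u.1 n]
      norm_num
    · rw [hsys.orthonormal_u.2 (Ne.symm hne), if_neg hne, mul_zero]
  rw [tsum_congr hterm, tsum_eq_single k (fun n hn => if_neg hn), if_pos rfl]


lemma my_tend_ev {E : Type*} [SeminormedAddCommGroup E] {f : ℕ → E} {a : E}
    (h : Tendsto f atTop (nhds a)) {ε : ℝ} (hε : 0 < ε) :
    ∀ᶠ n in atTop, ‖f n - a‖ < ε := by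
  obtain ⟨N, hN⟩ := Metric.tendsto_atTop.1 h ε hε
  exact eventually_atTop.2 ⟨N, fun n hn => by rw [← dist_eq_norm_sub]; exact hN n hn⟩

set_option maxHeartbeats 1000000 in
/-- Theorem 4.1 (1): for a compact operator with singular system `(σ; v, u)`
and a Petrov–Galerkin discretization from spans of the first `n` elements of arbitrary bases,
if `Σₖ |⟨b,uₖ⟩|²/σₖ² = ∞` then `‖Aₙ† Qₙ Q_{cl R(A)} b‖ → ∞`. -/
theorem stmt9 {X Y : Type*} [NormedAddCommGroup X] [InnerProductSpace ℂ X] [CompleteSpace X]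
    [NormedAddCommGroup Y] [InnerProductSpace ℂ Y] [CompleteSpace Y]
    (hX : ¬ FiniteDimensional ℂ X) (hY : ¬ FiniteDimensional ℂ Y)
    (A : X →L[ℂ] Y) (σ : ℕ → ℝ) (v : ℕ → X) (u : ℕ → Y)
    (hsys : IsSingularSystem A σ v u)
    (hu_complete : (Submodule.span ℂ (Set.range u)).topologicalClosure = ⊤)
    (ξ : ℕ → X) (η : ℕ → Y)
    (P : ℕ → X →L[ℂ] X) (Q : ℕ → Y →L[ℂ] Y)
    (hP : ∀ n, IsOrthProj (P n) (span ℂ (ξ '' Set.Iio n)))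
    (hQ : ∀ n, IsOrthProj (Q n) (span ℂ (η '' Set.Iio n)))
    (hPconv : ∀ x : X, Filter.Tendsto (fun n => P n x) atTop (nhds x))
    (hQconv : ∀ y : Y, Filter.Tendsto (fun n => Q n y) atTop (nhds y))
    (An : ℕ → X →L[ℂ] Y) (hAn : ∀ n, An n = Q n ∘L A ∘L P n)
    (B : ℕ → Y →L[ℂ] X) (hB : ∀ n, IsMPInv (An n) (B n))
    (b : Y) (hb : ¬ Summable (fun k => ‖⟪u k, b⟫_ℂ‖ ^ 2 / σ k ^ 2)) :
    Filter.Tendsto (fun n => ‖B n (Q n b)‖) atTop atTop := by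
  classical
  by_contra hdiv
  rw [tendsto_atTop_atTop] at hdiv
  push_neg at hdiv
  obtain ⟨C0, hC0⟩ := hdiv
  set C : ℝ := max C0 1 with hCdef
  have hC1 : (1:ℝ) ≤ C := le_max_right _ _
  have hCpos : (0:ℝ) < C := lt_of_lt_of_le one_pos hC1
  have hfreq : ∃ᶠ n in atTop, ‖B n (Q n b)‖ ≤ C := by
    rw [frequently_atTop]
    intro N
    obtain ⟨a, ha, hlt⟩ := hC0 N
    exact ⟨a, ha, le_trans hlt.le (le_max_left _ _)⟩
  have hQle : ∀ n (y : Y), ‖Q n y‖ ≤ ‖y‖ := fun n y =>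
    my_proj_norm_le (Q n) (hQ n).1 (hQ n).2.1 y
  have hPle : ∀ n (x : X), ‖P n x‖ ≤ ‖x‖ := fun n x =>
    my_proj_norm_le (P n) (hP n).1 (hP n).2.1 x
  -- the MP identity pointwise
  have hTBT : ∀ n (w : X), An n (B n (An n w)) = An n w := by
    intro n w
    have := ContinuousLinearMap.ext_iff.1 (hB n).1 w
    simpa using this
  have hR1 : ∀ n, (An n ∘L B n) ∘L (An n ∘L B n) = An n ∘L B n := by
    intro n
    ext w
    simpa using hTBT n (B n w)
  have hR2 : ∀ n, ContinuousLinearMap.adjoint (An n ∘L B n) = An n ∘L B n := fun n =>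
    (hB n).2.2.1
  have hbest : ∀ n (z : X), ‖Q n b - An n (B n (Q n b))‖ ≤ ‖Q n b - An n z‖ := by
    intro n z
    have hm : (An n ∘L B n) (An n z) = An n z := by simpa using hTBT n z
    have := my_proj_best (An n ∘L B n) (hR1 n) (hR2 n) (Q n b) (An n z) hm
    simpa using this
  -- density of the range of A
  have hbmem : b ∈ closure ((LinearMap.range (A : X →ₗ[ℂ] Y) : Submodule ℂ Y) : Set Y) := by
    have htop : (LinearMap.range (A : X →ₗ[ℂ] Y)).topologicalClosure = ⊤ := by
      rw [← hsys.dense_u, hu_complete]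
    have : b ∈ (LinearMap.range (A : X →ₗ[ℂ] Y)).topologicalClosure := htop ▸ Submodule.mem_top
    rwa [← Submodule.topologicalClosure_coe]
  have hdense : ∀ ε > 0, ∃ z : X, ‖A z - b‖ < ε := by
    intro ε hε
    obtain ⟨y, hy, hdist⟩ := Metric.mem_closure_iff.1 hbmem ε hε
    obtain ⟨z, rfl⟩ := hy
    exact ⟨z, by rwa [← dist_eq_norm, dist_comm]⟩
  -- key convergence: An n (B n (Q n b)) → b
  have hkey : ∀ ε > 0, ∀ᶠ n in atTop, ‖b - An n (B n (Q n b))‖ < ε := by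
    intro ε hε
    obtain ⟨z, hz⟩ := hdense (ε/5) (by positivity)
    have hA1 : (0:ℝ) < ‖A‖ + 1 := by positivity
    filter_upwards [my_tend_ev (hQconv b) (show (0:ℝ) < ε/5 by positivity),
      my_tend_ev (hQconv (A z)) (show (0:ℝ) < ε/5 by positivity),
      my_tend_ev (hPconv z) (show (0:ℝ) < ε/(5*(‖A‖+1)) by positivity)] with n h1 h2 h3
    have hAnz : An n z = Q n (A (P n z)) := by rw [hAn]; rfl
    have step1 : ‖Q n (A z) - An n z‖ ≤ ε/5 := by
      rw [hAnz, ← map_sub]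
      calc ‖Q n (A z - A (P n z))‖ ≤ ‖A z - A (P n z)‖ := hQle n _
        _ = ‖A (z - P n z)‖ := by rw [map_sub]
        _ ≤ ‖A‖ * ‖z - P n z‖ := A.le_opNorm _
        _ ≤ (‖A‖ + 1) * (ε/(5*(‖A‖+1))) := by
            have h3' : ‖z - P n z‖ ≤ ε/(5*(‖A‖+1)) := by
              rw [norm_sub_rev]; exact h3.le
            have hA0 : (0:ℝ) ≤ ‖A‖ := norm_nonneg _
            nlinarith [norm_nonneg (z - P n z)]
        _ = ε/5 := by field_simp
    have step2 : ‖Q n b - An n z‖ ≤ ‖Q n b - b‖ + ‖b - A z‖ + ‖A z - Q n (A z)‖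
        + ‖Q n (A z) - An n z‖ := by
      have hdecomp : Q n b - An n z = ((Q n b - b) + (b - A z) + (A z - Q n (A z)))
          + (Q n (A z) - An n z) := by abel
      calc ‖Q n b - An n z‖
          ≤ ‖(Q n b - b) + (b - A z) + (A z - Q n (A z))‖ + ‖Q n (A z) - An n z‖ := by
            rw [hdecomp]; exact norm_add_le _ _
        _ ≤ (‖(Q n b - b) + (b - A z)‖ + ‖A z - Q n (A z)‖) + ‖Q n (A z) - An n z‖ := by
            gcongr; exact norm_add_le _ _
        _ ≤ ((‖Q n b - b‖ + ‖b - A z‖) + ‖A z - Q n (A z)‖) + ‖Q n (A z) - An n z‖ := by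
            gcongr; exact norm_add_le _ _
        _ = _ := by ring
    have t1 : ‖b - An n (B n (Q n b))‖ ≤ ‖b - Q n b‖ + ‖Q n b - An n (B n (Q n b))‖ := by
      have hd : b - An n (B n (Q n b)) = (b - Q n b) + (Q n b - An n (B n (Q n b))) := by abel
      rw [hd]; exact norm_add_le _ _
    have t2 := hbest n z
    have hb1 : ‖b - Q n b‖ < ε/5 := by rw [norm_sub_rev]; exact h1
    have hb2 : ‖b - A z‖ < ε/5 := by rw [norm_sub_rev]; exact hz
    have hb3 : ‖A z - Q n (A z)‖ < ε/5 := by rw [norm_sub_rev]; exact h2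
    linarith
  -- now derive the summability contradiction
  refine hb (summable_of_sum_range_le (c := C ^ 2) (fun k => by positivity) (fun N => ?_))
  show ∑ i ∈ Finset.range N, ‖⟪u i, b⟫_ℂ‖ ^ 2 / σ i ^ 2 ≤ C ^ 2
  refine le_of_forall_pos_le_add (fun δ hδ => ?_)
  rcases Nat.eq_zero_or_pos N with rfl | hN
  · simp
    positivity
  have hne : (Finset.range N).Nonempty := ⟨0, Finset.mem_range.2 hN⟩
  set m := (Finset.range N).inf' hne σ with hm
  have hmpos : 0 < m := (Finset.lt_inf'_iff hne).2 (fun i _ => hsys.pos i)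
  have hmle : ∀ k ∈ Finset.range N, m ≤ σ k := fun k hk => Finset.inf'_le σ hk
  set θ : ℝ := min 1 (δ / (N * (2 * C + 1))) with hθdef
  have hNpos : (0:ℝ) < N := by exact_mod_cast hN
  have hθpos : 0 < θ := lt_min one_pos (by positivity)
  have hθ1 : θ ≤ 1 := min_le_left _ _
  have hθ2 : (N : ℝ) * (θ * (2 * C + 1)) ≤ δ := by
    have h := min_le_right 1 (δ / (N * (2 * C + 1)))
    have hpos : (0:ℝ) < N * (2 * C + 1) := by positivity
    calc (N : ℝ) * (θ * (2 * C + 1)) = θ * (N * (2 * C + 1)) := by ring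
      _ ≤ (δ / (N * (2 * C + 1))) * (N * (2 * C + 1)) :=
          mul_le_mul_of_nonneg_right (hθdef ▸ h) hpos.le
      _ = δ := by field_simp
  set ε : ℝ := θ * m / (1 + ‖A‖ * C) with hεdef
  have hdenpos : (0:ℝ) < 1 + ‖A‖ * C := by positivity
  have hεpos : 0 < ε := by positivity
  have e1 := hkey ε hεpos
  have e2 : ∀ᶠ n in atTop, ∀ k ∈ Finset.range N, ‖Q n (u k) - u k‖ < ε :=
    eventually_all_finset (Finset.range N) |>.2
      (fun k _ => my_tend_ev (hQconv (u k)) hεpos)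
  obtain ⟨n, hxC, h1, h2⟩ := (hfreq.and_eventually (e1.and e2)).exists
  set x := B n (Q n b) with hxdef
  set y := P n x with hydef
  have hyC : ‖y‖ ≤ C := le_trans (hPle n x) hxC
  have hAyC : ‖A y‖ ≤ ‖A‖ * C := le_trans (A.le_opNorm y) (by
    have := norm_nonneg A
    nlinarith)
  -- per-k bound
  have hkbound : ∀ k ∈ Finset.range N, ‖⟪u k, b⟫_ℂ‖ / σ k ≤ ‖⟪v k, y⟫_ℂ‖ + θ := by
    intro k hk
    have hAnx : An n x = Q n (A y) := by rw [hAn]; rfl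
    have hadj : ⟪u k, Q n (A y)⟫_ℂ = ⟪Q n (u k), A y⟫_ℂ := by
      conv_lhs => rw [← (hQ n).2.1]
      exact ContinuousLinearMap.adjoint_inner_right _ _ _
    have hsplit : ⟪u k, An n x⟫_ℂ = (σ k : ℂ) * ⟪v k, y⟫_ℂ + ⟪Q n (u k) - u k, A y⟫_ℂ := by
      rw [hAnx, hadj, ← my_coeff hsys y k, ← inner_add_left]
      congr 1
      abel
    have hb2' : ‖⟪u k, b - An n x⟫_ℂ‖ ≤ ‖b - An n x‖ := by
      calc ‖⟪u k, b - An n x⟫_ℂ‖ ≤ ‖u k‖ * ‖b - An n x‖ := norm_inner_le_norm _ _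
        _ = ‖b - An n x‖ := by rw [hsys.orthonormal_u.1 k, one_mul]
    have hb3' : ‖⟪Q n (u k) - u k, A y⟫_ℂ‖ ≤ ε * (‖A‖ * C) := by
      calc ‖⟪Q n (u k) - u k, A y⟫_ℂ‖ ≤ ‖Q n (u k) - u k‖ * ‖A y‖ := norm_inner_le_norm _ _
        _ ≤ ε * (‖A‖ * C) := by
            have := (h2 k hk).le
            have h0 := norm_nonneg (Q n (u k) - u k)
            have h0' := norm_nonneg (A y)
            nlinarith
    have hb1' : ‖⟪u k, b⟫_ℂ‖ ≤ ‖b - An n x‖ + ‖⟪u k, An n x⟫_ℂ‖ := by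
      have hd : ⟪u k, b⟫_ℂ = ⟪u k, b - An n x⟫_ℂ + ⟪u k, An n x⟫_ℂ := by
        rw [← inner_add_right]
        congr 1
        abel
      calc ‖⟪u k, b⟫_ℂ‖ ≤ ‖⟪u k, b - An n x⟫_ℂ‖ + ‖⟪u k, An n x⟫_ℂ‖ := by
            rw [hd]; exact norm_add_le _ _
        _ ≤ _ := by gcongr
    have hsplitnorm : ‖⟪u k, An n x⟫_ℂ‖ ≤ σ k * ‖⟪v k, y⟫_ℂ‖ + ε * (‖A‖ * C) := by
      rw [hsplit]
      calc ‖(σ k : ℂ) * ⟪v k, y⟫_ℂ + ⟪Q n (u k) - u k, A y⟫_ℂ‖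
          ≤ ‖(σ k : ℂ) * ⟪v k, y⟫_ℂ‖ + ‖⟪Q n (u k) - u k, A y⟫_ℂ‖ := norm_add_le _ _
        _ ≤ σ k * ‖⟪v k, y⟫_ℂ‖ + ε * (‖A‖ * C) := by
            have : ‖(σ k : ℂ) * ⟪v k, y⟫_ℂ‖ = σ k * ‖⟪v k, y⟫_ℂ‖ := by
              rw [norm_mul, Complex.norm_real, Real.norm_eq_abs,
                abs_of_pos (hsys.pos k)]
            rw [this]
            gcongr
    have hεm : ε * (1 + ‖A‖ * C) = θ * m := by
      rw [hεdef]; field_simp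
    have htotal : ‖⟪u k, b⟫_ℂ‖ ≤ σ k * ‖⟪v k, y⟫_ℂ‖ + θ * σ k := by
      have hmk := hmle k hk
      have : ‖b - An n x‖ + ε * (‖A‖ * C) ≤ θ * σ k := by
        have h1' := h1.le
        nlinarith [hθpos.le, hmpos.le]
      linarith
    rw [div_le_iff₀ (hsys.pos k)]
    nlinarith [hsys.pos k]
  -- Bessel and summation
  have hbessel : ∑ k ∈ Finset.range N, ‖⟪v k, y⟫_ℂ‖ ^ 2 ≤ C ^ 2 := by
    calc ∑ k ∈ Finset.range N, ‖⟪v k, y⟫_ℂ‖ ^ 2 ≤ ‖y‖ ^ 2 :=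
          hsys.orthonormal_v.sum_inner_products_le y
      _ ≤ C ^ 2 := by nlinarith [norm_nonneg y]
  have hfinal : ∑ k ∈ Finset.range N, ‖⟪u k, b⟫_ℂ‖ ^ 2 / σ k ^ 2
      ≤ ∑ k ∈ Finset.range N, (‖⟪v k, y⟫_ℂ‖ ^ 2 + θ * (2 * C + 1)) := by
    refine Finset.sum_le_sum (fun k hk => ?_)
    have hkb := hkbound k hk
    have hvC : ‖⟪v k, y⟫_ℂ‖ ≤ C := by
      calc ‖⟪v k, y⟫_ℂ‖ ≤ ‖v k‖ * ‖y‖ := norm_inner_le_norm _ _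
        _ ≤ C := by rw [hsys.orthonormal_v.1 k, one_mul]; exact hyC
    have hdiv : ‖⟪u k, b⟫_ℂ‖ ^ 2 / σ k ^ 2 = (‖⟪u k, b⟫_ℂ‖ / σ k) ^ 2 := by
      rw [div_pow]
    rw [hdiv]
    have h0 : (0:ℝ) ≤ ‖⟪u k, b⟫_ℂ‖ / σ k := div_nonneg (norm_nonneg _) (hsys.pos k).le
    nlinarith [norm_nonneg (⟪v k, y⟫_ℂ)]
  rw [Finset.sum_add_distrib, Finset.sum_const, Finset.card_range,
    nsmul_eq_mul] at hfinal
  calc ∑ i ∈ Finset.range N, ‖⟪u i, b⟫_ℂ‖ ^ 2 / σ i ^ 2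
      ≤ ∑ k ∈ Finset.range N, ‖⟪v k, y⟫_ℂ‖ ^ 2 + (N:ℝ) * (θ * (2 * C + 1)) := hfinal
    _ ≤ C ^ 2 + δ := add_le_add hbessel hθ2
end
end
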